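/- arXiv:2302.07457 — 3 statements merged into one kernel-verified Lean document; each statement's English description precedes it below -/
import Mathlib

section
/- Fix δ ∈ (0,1), ε ∈ (0,2), and set c = 1 + 1/√(ln(|Ω|/δ)). Suppose every state-action pair in Ω is sampled uniformly (N i.i.d. next-state samples per pair, with P̂ the empirical estimate), and the total number of collected transition samples satisfies N·|Ω| ≥ (4γ² · C_v² · c² · |Ω| · |S^E| / ((1−γ)² ε²)) · ln(|Ω|/δ), where C_v = (C_r + C_u + log|A|)/(1−γ). Then, with probability at least 1−δ, L(θ*) − L(θ̂) ≤ ε, where θ* is any maximizer of the likelihood objective L and θ̂ is any maximizer of the surrogate objective L̂. -/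
open Real BigOperators Finset MeasureTheory
open scoped ProbabilityTheory

set_option maxHeartbeats 1600000
noncomputable section

/-- `P` is a transition kernel: each row `P s a ·` is a probability distribution. -/
def IsKernel {S A : Type} [Fintype S] (P : S → A → S → ℝ) : Prop :=
  (∀ s a s', 0 ≤ P s a s') ∧ ∀ s a, ∑ s', P s a s' = 1

/-- `p` is a policy: each `p s ·` is a probability distribution over actions. -/
def IsPolicy {S A : Type} [Fintype A] (p : S → A → ℝ) : Prop :=
  (∀ s a, 0 ≤ p s a) ∧ ∀ s, ∑ a, p s a = 1

/-- `η` is a probability distribution over states. -/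
def IsDist {S : Type} [Fintype S] (η : S → ℝ) : Prop :=
  (∀ s, 0 ≤ η s) ∧ ∑ s, η s = 1

/-- Distribution of the state at time `t` under initial distribution `η`,
policy `pol` and transition kernel `P`. -/
def stateDist {S A : Type} [Fintype S] [Fintype A]
    (P : S → A → S → ℝ) (pol : S → A → ℝ) (η : S → ℝ) : ℕ → S → ℝ
  | 0 => η
  | (t + 1) => fun s' => ∑ s, ∑ a, stateDist P pol η t s * pol s a * P s a s'

/-- `E_{τ ∼ (η, pol, P)} [ ∑_t γ^t f(s_t, a_t) ]`. -/
def discSum {S A : Type} [Fintype S] [Fintype A]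
    (γ : ℝ) (P : S → A → S → ℝ) (pol : S → A → ℝ) (η : S → ℝ) (f : S → A → ℝ) : ℝ :=
  ∑' t : ℕ, γ ^ t * ∑ s, ∑ a, stateDist P pol η t s * pol s a * f s a

/-- Discounted state-action visitation measure
`d(s,a) = (1-γ) pol(a|s) ∑_t γ^t Pr(s_t = s)`. -/
def visit {S A : Type} [Fintype S] [Fintype A]
    (γ : ℝ) (P : S → A → S → ℝ) (pol : S → A → ℝ) (η : S → ℝ) (s : S) (a : A) : ℝ :=
  (1 - γ) * pol s a * ∑' t : ℕ, γ ^ t * stateDist P pol η t s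

/-- Log-sum-exp soft value function `V(s) = log ∑_a exp Q(s,a)`. -/
def lse {S A : Type} [Fintype A] (Q : S → A → ℝ) (s : S) : ℝ :=
  Real.log (∑ a, Real.exp (Q s a))

/-- Softmax policy `π(a|s) = exp Q(s,a) / ∑_{a'} exp Q(s,a')`. -/
def softmax {S A : Type} [Fintype A] (Q : S → A → ℝ) (s : S) (a : A) : ℝ :=
  Real.exp (Q s a) / ∑ a', Real.exp (Q s a')

open scoped Classical in
/-- The expert-visited state-action pairs `Ω = {(s,a) : dᴱ(s,a) > 0}`. -/
def expertPairs {S A : Type} [Fintype S] [Fintype A]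
    (γ : ℝ) (P : S → A → S → ℝ) (pol : S → A → ℝ) (η : S → ℝ) : Finset (S × A) :=
  Finset.univ.filter fun p => 0 < visit γ P pol η p.1 p.2

open scoped Classical in
/-- The expert-visited states `Sᴱ = {s : ∑_a dᴱ(s,a) > 0}`. -/
def expertStates {S A : Type} [Fintype S] [Fintype A]
    (γ : ℝ) (P : S → A → S → ℝ) (pol : S → A → ℝ) (η : S → ℝ) : Finset S :=
  Finset.univ.filter fun s => 0 < ∑ a, visit γ P pol η s a


section MDPLemmas

variable {S A : Type} [Fintype S] [Fintype A]

/-- Comparison with a geometric series. -/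
lemma summable_geom_bound {γ C : ℝ} (hγ0 : 0 ≤ γ) (hγ1 : γ < 1) (u : ℕ → ℝ)
    (h : ∀ t, |u t| ≤ C * γ ^ t) : Summable u := by
  refine Summable.of_abs (Summable.of_nonneg_of_le (fun t => abs_nonneg _) h ?_)
  exact (summable_geometric_of_lt_one hγ0 hγ1).mul_left C

lemma stateDist_nonneg {P : S → A → S → ℝ} {pol : S → A → ℝ} {η : S → ℝ}
    (hP : IsKernel P) (hpol : IsPolicy pol) (hη : IsDist η) :
    ∀ t s, 0 ≤ stateDist P pol η t s := by
  intro t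
  induction t with
  | zero => exact hη.1
  | succ t ih =>
    intro s'
    apply Finset.sum_nonneg; intro s _
    apply Finset.sum_nonneg; intro a _
    exact mul_nonneg (mul_nonneg (ih s) (hpol.1 s a)) (hP.1 s a s')

lemma stateDist_sum {P : S → A → S → ℝ} {pol : S → A → ℝ} {η : S → ℝ}
    (hP : IsKernel P) (hpol : IsPolicy pol) (hη : IsDist η) :
    ∀ t, ∑ s, stateDist P pol η t s = 1 := by
  intro t
  induction t with
  | zero => exact hη.2
  | succ t ih =>
    show ∑ s', ∑ s, ∑ a, stateDist P pol η t s * pol s a * P s a s' = 1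
    rw [Finset.sum_comm]
    have : ∀ s, ∑ s', ∑ a, stateDist P pol η t s * pol s a * P s a s'
        = stateDist P pol η t s := by
      intro s
      rw [Finset.sum_comm]
      have : ∀ a, ∑ s', stateDist P pol η t s * pol s a * P s a s'
          = stateDist P pol η t s * pol s a := by
        intro a
        rw [← Finset.mul_sum, hP.2 s a, mul_one]
      rw [Finset.sum_congr rfl fun a _ => this a, ← Finset.mul_sum, hpol.2 s, mul_one]
    rw [Finset.sum_congr rfl fun s _ => this s, ih]

/-- The state-action weights at time `t` sum to 1. -/
lemma weight_sum {P : S → A → S → ℝ} {pol : S → A → ℝ} {η : S → ℝ}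
    (hP : IsKernel P) (hpol : IsPolicy pol) (hη : IsDist η) (t : ℕ) :
    ∑ s, ∑ a, stateDist P pol η t s * pol s a = 1 := by
  have : ∀ s, ∑ a, stateDist P pol η t s * pol s a = stateDist P pol η t s := by
    intro s; rw [← Finset.mul_sum, hpol.2 s, mul_one]
  rw [Finset.sum_congr rfl fun s _ => this s, stateDist_sum hP hpol hη t]

/-- A weighted average is bounded by a bound on the terms with nonzero weight. -/
lemma abs_weighted_le {P : S → A → S → ℝ} {pol : S → A → ℝ} {η : S → ℝ}
    (hP : IsKernel P) (hpol : IsPolicy pol) (hη : IsDist η) (t : ℕ)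
    (f : S → A → ℝ) (C : ℝ) (hC : 0 ≤ C)
    (hf : ∀ s a, 0 < stateDist P pol η t s * pol s a → |f s a| ≤ C) :
    |∑ s, ∑ a, stateDist P pol η t s * pol s a * f s a| ≤ C := by
  have hw : ∀ s a, 0 ≤ stateDist P pol η t s * pol s a := fun s a =>
    mul_nonneg (stateDist_nonneg hP hpol hη t s) (hpol.1 s a)
  calc |∑ s, ∑ a, stateDist P pol η t s * pol s a * f s a|
      ≤ ∑ s, |∑ a, stateDist P pol η t s * pol s a * f s a| :=
        Finset.abs_sum_le_sum_abs _ _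
    _ ≤ ∑ s, ∑ a, |stateDist P pol η t s * pol s a * f s a| :=
        Finset.sum_le_sum fun s _ => Finset.abs_sum_le_sum_abs _ _
    _ ≤ ∑ s, ∑ a, stateDist P pol η t s * pol s a * C := by
        apply Finset.sum_le_sum; intro s _
        apply Finset.sum_le_sum; intro a _
        rw [abs_mul, abs_of_nonneg (hw s a)]
        rcases (hw s a).eq_or_lt with h | h
        · rw [← h]; simp
        · exact mul_le_mul_of_nonneg_left (hf s a h) (hw s a)
    _ = C := by
        have : ∑ s, ∑ a, stateDist P pol η t s * pol s a * C
            = (∑ s, ∑ a, stateDist P pol η t s * pol s a) * C := by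
          rw [Finset.sum_mul]
          exact Finset.sum_congr rfl fun s _ => by rw [Finset.sum_mul]
        rw [this, weight_sum hP hpol hη t, one_mul]


variable [Nonempty S] [Nonempty A]

/-- Summability of the discounted sum terms for bounded `f`. -/
lemma summable_discSum {γ : ℝ} (hγ0 : 0 ≤ γ) (hγ1 : γ < 1)
    {P : S → A → S → ℝ} {pol : S → A → ℝ} {η : S → ℝ}
    (hP : IsKernel P) (hpol : IsPolicy pol) (hη : IsDist η)
    (f : S → A → ℝ) (C : ℝ) (hf : ∀ s a, |f s a| ≤ C) :
    Summable (fun t => γ ^ t * ∑ s, ∑ a, stateDist P pol η t s * pol s a * f s a) := by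
  have hC : 0 ≤ C := le_trans (abs_nonneg _) (hf (Classical.arbitrary S) (Classical.arbitrary A))
  apply summable_geom_bound hγ0 hγ1
  intro t
  rw [abs_mul, abs_of_nonneg (pow_nonneg hγ0 t), mul_comm]
  exact mul_le_mul_of_nonneg_right
    (abs_weighted_le hP hpol hη t f C hC (fun s a _ => hf s a)) (pow_nonneg hγ0 t)

/-- `discSum` is additive for bounded integrands. -/
lemma discSum_add {γ : ℝ} (hγ0 : 0 ≤ γ) (hγ1 : γ < 1)
    {P : S → A → S → ℝ} {pol : S → A → ℝ} {η : S → ℝ}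
    (hP : IsKernel P) (hpol : IsPolicy pol) (hη : IsDist η)
    (f g : S → A → ℝ) (Cf Cg : ℝ) (hf : ∀ s a, |f s a| ≤ Cf) (hg : ∀ s a, |g s a| ≤ Cg) :
    discSum γ P pol η (fun s a => f s a + g s a)
      = discSum γ P pol η f + discSum γ P pol η g := by
  unfold discSum
  rw [← Summable.tsum_add (summable_discSum hγ0 hγ1 hP hpol hη f Cf hf)
    (summable_discSum hγ0 hγ1 hP hpol hη g Cg hg)]
  congr 1; funext t
  rw [← mul_add]
  congr 1
  rw [← Finset.sum_add_distrib]
  refine Finset.sum_congr rfl fun s _ => ?_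
  rw [← Finset.sum_add_distrib]
  exact Finset.sum_congr rfl fun a _ => by ring

/-- If the weight at time `t` is positive, then the pair is visited. -/
lemma visit_pos_of_weight {γ : ℝ} (hγ0 : 0 < γ) (hγ1 : γ < 1)
    {P : S → A → S → ℝ} {pol : S → A → ℝ} {η : S → ℝ}
    (hP : IsKernel P) (hpol : IsPolicy pol) (hη : IsDist η)
    {t : ℕ} {s : S} {a : A} (h : 0 < stateDist P pol η t s * pol s a) :
    0 < visit γ P pol η s a := by
  have hρ : 0 < stateDist P pol η t s := by
    rcases (stateDist_nonneg hP hpol hη t s).eq_or_lt with h' | h'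
    · exfalso; rw [← h'] at h; simp at h
    · exact h'
  have hπ : 0 < pol s a := by
    rcases (hpol.1 s a).eq_or_lt with h' | h'
    · exfalso; rw [← h'] at h; simp at h
    · exact h'
  have hsummable : Summable (fun t => γ ^ t * stateDist P pol η t s) := by
    apply summable_geom_bound (C := 1) hγ0.le hγ1
    intro t'
    rw [abs_mul, abs_of_nonneg (pow_nonneg hγ0.le t'),
      abs_of_nonneg (stateDist_nonneg hP hpol hη t' s), mul_comm]
    refine mul_le_mul_of_nonneg_right ?_ (pow_nonneg hγ0.le t')
    calc stateDist P pol η t' s ≤ ∑ s', stateDist P pol η t' s' :=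
          Finset.single_le_sum (fun s' _ => stateDist_nonneg hP hpol hη t' s')
            (Finset.mem_univ s)
      _ = 1 := stateDist_sum hP hpol hη t'
  have htsum : 0 < ∑' t, γ ^ t * stateDist P pol η t s := by
    have hle : γ ^ t * stateDist P pol η t s ≤ ∑' t, γ ^ t * stateDist P pol η t s :=
      Summable.le_tsum hsummable t (fun t' _ => mul_nonneg (pow_nonneg hγ0.le t')
        (stateDist_nonneg hP hpol hη t' s))
    exact lt_of_lt_of_le (mul_pos (pow_pos hγ0 t) hρ) hle
  exact mul_pos (mul_pos (by linarith) hπ) htsum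

/-- Bound on `discSum` from a bound on `f` over visited pairs. -/
lemma discSum_bound {γ : ℝ} (hγ0 : 0 < γ) (hγ1 : γ < 1)
    {P : S → A → S → ℝ} {pol : S → A → ℝ} {η : S → ℝ}
    (hP : IsKernel P) (hpol : IsPolicy pol) (hη : IsDist η)
    (f : S → A → ℝ) (C : ℝ) (hC : 0 ≤ C)
    (hf : ∀ s a, 0 < visit γ P pol η s a → |f s a| ≤ C) :
    |discSum γ P pol η f| ≤ C / (1 - γ) := by
  set u : ℕ → ℝ := fun t => γ ^ t * ∑ s, ∑ a, stateDist P pol η t s * pol s a * f s a with hu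
  have hbound : ∀ t, |u t| ≤ C * γ ^ t := by
    intro t
    rw [abs_mul, abs_of_nonneg (pow_nonneg hγ0.le t), mul_comm]
    refine mul_le_mul_of_nonneg_right ?_ (pow_nonneg hγ0.le t)
    exact abs_weighted_le hP hpol hη t f C hC
      (fun s a hw => hf s a (visit_pos_of_weight hγ0 hγ1 hP hpol hη hw))
  have hsum : Summable u := summable_geom_bound hγ0.le hγ1 u hbound
  have hsumC : Summable (fun t : ℕ => C * γ ^ t) :=
    (summable_geometric_of_lt_one hγ0.le hγ1).mul_left C
  have habs : Summable (fun t => |u t|) :=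
    Summable.of_nonneg_of_le (fun t => abs_nonneg _) hbound hsumC
  calc |discSum γ P pol η f| = |∑' t, u t| := rfl
    _ ≤ ∑' t, |u t| := by
        have h := norm_tsum_le_tsum_norm (f := u) (by simpa only [Real.norm_eq_abs] using habs)
        simpa only [Real.norm_eq_abs] using h
    _ ≤ ∑' t : ℕ, C * γ ^ t := Summable.tsum_le_tsum hbound habs hsumC
    _ = C * (1 - γ)⁻¹ := by rw [tsum_mul_left, tsum_geometric_of_lt_one hγ0.le hγ1]
    _ = C / (1 - γ) := by rw [div_eq_mul_inv]

/-- Telescoping identity: the discounted sum of `V(s) - γ (PV)(s,a)` equals `E_η V`. -/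
lemma discSum_telescope {γ : ℝ} (hγ0 : 0 ≤ γ) (hγ1 : γ < 1)
    {P : S → A → S → ℝ} {pol : S → A → ℝ} {η : S → ℝ}
    (hP : IsKernel P) (hpol : IsPolicy pol) (hη : IsDist η) (V : S → ℝ) :
    discSum γ P pol η (fun s a => V s - γ * ∑ s', P s a s' * V s')
      = ∑ s, η s * V s := by
  set W : ℕ → ℝ := fun t => ∑ s, stateDist P pol η t s * V s with hW
  set MV : ℝ := ∑ s, |V s| with hMV
  have hMV0 : 0 ≤ MV := Finset.sum_nonneg fun s _ => abs_nonneg _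
  have hWbound : ∀ t, |W t| ≤ MV := by
    intro t
    calc |W t| ≤ ∑ s, |stateDist P pol η t s * V s| := Finset.abs_sum_le_sum_abs _ _
      _ ≤ ∑ s, |V s| := by
          apply Finset.sum_le_sum; intro s _
          rw [abs_mul, abs_of_nonneg (stateDist_nonneg hP hpol hη t s)]
          calc stateDist P pol η t s * |V s| ≤ 1 * |V s| := by
                refine mul_le_mul_of_nonneg_right ?_ (abs_nonneg _)
                calc stateDist P pol η t s ≤ ∑ s', stateDist P pol η t s' :=
                      Finset.single_le_sum (fun s' _ => stateDist_nonneg hP hpol hη t s')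
                        (Finset.mem_univ s)
                  _ = 1 := stateDist_sum hP hpol hη t
            _ = |V s| := one_mul _
  set u : ℕ → ℝ := fun t => γ ^ t * W t with hu
  have h1 : ∀ t, ∑ s, ∑ a, stateDist P pol η t s * pol s a * V s = W t := by
    intro t
    refine Finset.sum_congr rfl fun s _ => ?_
    calc ∑ a, stateDist P pol η t s * pol s a * V s
        = ∑ a, pol s a * (stateDist P pol η t s * V s) :=
          Finset.sum_congr rfl fun a _ => by ring
      _ = (∑ a, pol s a) * (stateDist P pol η t s * V s) := (Finset.sum_mul _ _ _).symm
      _ = stateDist P pol η t s * V s := by rw [hpol.2 s, one_mul]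
  have h2 : ∀ t, ∑ s, ∑ a, stateDist P pol η t s * pol s a * (∑ s', P s a s' * V s')
      = W (t + 1) := by
    intro t
    calc ∑ s, ∑ a, stateDist P pol η t s * pol s a * (∑ s', P s a s' * V s')
        = ∑ s, ∑ a, ∑ s', stateDist P pol η t s * pol s a * (P s a s' * V s') := by
          refine Finset.sum_congr rfl fun s _ => Finset.sum_congr rfl fun a _ => ?_
          rw [Finset.mul_sum]
      _ = ∑ s, ∑ s', ∑ a, stateDist P pol η t s * pol s a * (P s a s' * V s') := by
          refine Finset.sum_congr rfl fun s _ => ?_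
          exact Finset.sum_comm
      _ = ∑ s', ∑ s, ∑ a, stateDist P pol η t s * pol s a * (P s a s' * V s') :=
          Finset.sum_comm
      _ = ∑ s', (∑ s, ∑ a, stateDist P pol η t s * pol s a * P s a s') * V s' := by
          refine Finset.sum_congr rfl fun s' _ => ?_
          rw [Finset.sum_mul]
          refine Finset.sum_congr rfl fun s _ => ?_
          rw [Finset.sum_mul]
          exact Finset.sum_congr rfl fun a _ => by ring
      _ = W (t + 1) := rfl
  have hinner : ∀ t, (∑ s, ∑ a, stateDist P pol η t s * pol s a *
      (V s - γ * ∑ s', P s a s' * V s')) = W t - γ * W (t + 1) := by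
    intro t
    have expand : ∀ s a, stateDist P pol η t s * pol s a *
        (V s - γ * ∑ s', P s a s' * V s')
        = stateDist P pol η t s * pol s a * V s
          - γ * (stateDist P pol η t s * pol s a * (∑ s', P s a s' * V s')) := by
      intro s a; ring
    calc (∑ s, ∑ a, stateDist P pol η t s * pol s a * (V s - γ * ∑ s', P s a s' * V s'))
        = ∑ s, ∑ a, (stateDist P pol η t s * pol s a * V s
          - γ * (stateDist P pol η t s * pol s a * (∑ s', P s a s' * V s'))) := by
          exact Finset.sum_congr rfl fun s _ => Finset.sum_congr rfl fun a _ => expand s a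
      _ = (∑ s, ∑ a, stateDist P pol η t s * pol s a * V s)
          - ∑ s, ∑ a, γ * (stateDist P pol η t s * pol s a * (∑ s', P s a s' * V s')) := by
          rw [← Finset.sum_sub_distrib]
          exact Finset.sum_congr rfl fun s _ => by rw [← Finset.sum_sub_distrib]
      _ = W t - γ * W (t + 1) := by
          rw [h1 t, ← h2 t, Finset.mul_sum]
          congr 1
          exact Finset.sum_congr rfl fun s _ => by rw [Finset.mul_sum]
  have hterm : ∀ t, γ ^ t * (W t - γ * W (t + 1)) = u t - u (t + 1) := by
    intro t
    simp only [hu, pow_succ]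
    ring
  have husum : Summable (fun t => u t - u (t + 1)) := by
    apply summable_geom_bound (C := 2 * MV) hγ0 hγ1
    intro t
    have hut : ∀ t', |u t'| ≤ MV * γ ^ t' := by
      intro t'
      rw [hu, abs_mul, abs_of_nonneg (pow_nonneg hγ0 t'), mul_comm]
      exact mul_le_mul_of_nonneg_right (hWbound t') (pow_nonneg hγ0 t')
    have hpow : γ ^ (t + 1) ≤ γ ^ t := by
      rw [pow_succ]
      nlinarith [pow_nonneg hγ0 t]
    calc |u t - u (t + 1)| ≤ |u t| + |u (t + 1)| := abs_sub _ _
      _ ≤ MV * γ ^ t + MV * γ ^ (t + 1) := add_le_add (hut t) (hut (t + 1))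
      _ ≤ 2 * MV * γ ^ t := by nlinarith [mul_le_mul_of_nonneg_left hpow hMV0]
  have hlim : Filter.Tendsto u Filter.atTop (nhds 0) := by
    apply squeeze_zero_norm (a := fun n => MV * γ ^ n)
    · intro n
      rw [Real.norm_eq_abs, hu, abs_mul, abs_of_nonneg (pow_nonneg hγ0 n), mul_comm]
      exact mul_le_mul_of_nonneg_right (hWbound n) (pow_nonneg hγ0 n)
    · have := (tendsto_pow_atTop_nhds_zero_of_lt_one hγ0 hγ1).const_mul MV
      simpa using this
  have hpartial : ∀ n, ∑ t ∈ Finset.range n, (u t - u (t + 1)) = u 0 - u n :=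
    fun n => Finset.sum_range_sub' u n
  have h6 : Filter.Tendsto (fun n => ∑ t ∈ Finset.range n, (u t - u (t + 1)))
      Filter.atTop (nhds (u 0 - 0)) := by
    rw [funext hpartial]
    exact Filter.Tendsto.sub tendsto_const_nhds hlim
  have h7 : (∑' t, (u t - u (t + 1))) = u 0 - 0 :=
    tendsto_nhds_unique husum.hasSum.tendsto_sum_nat h6
  have hW0 : W 0 = ∑ s, η s * V s := rfl
  calc discSum γ P pol η (fun s a => V s - γ * ∑ s', P s a s' * V s')
      = ∑' t, γ ^ t * (W t - γ * W (t + 1)) := by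
        unfold discSum
        exact tsum_congr fun t => by rw [hinner t]
    _ = ∑' t, (u t - u (t + 1)) := tsum_congr fun t => hterm t
    _ = u 0 - 0 := h7
    _ = ∑ s, η s * V s := by rw [hu]; simp [hW0]

/-- `log ∘ softmax` in terms of `Q` and `lse`. -/
lemma log_softmax (Qf : S → A → ℝ) (s : S) (a : A) :
    Real.log (softmax Qf s a) = Qf s a - lse Qf s := by
  unfold softmax lse
  have hpos : 0 < ∑ a', Real.exp (Qf s a') :=
    Finset.sum_pos (fun a' _ => Real.exp_pos _) Finset.univ_nonempty
  rw [Real.log_div (Real.exp_ne_zero _) hpos.ne', Real.log_exp]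

/-- A convex combination is bounded by a bound on the terms. -/
lemma abs_convex_le (w V : S → ℝ) (hw : ∀ s, 0 ≤ w s) (hw1 : ∑ s, w s = 1)
    (M : ℝ) (hV : ∀ s, |V s| ≤ M) : |∑ s, w s * V s| ≤ M := by
  calc |∑ s, w s * V s| ≤ ∑ s, |w s * V s| := Finset.abs_sum_le_sum_abs _ _
    _ ≤ ∑ s, w s * M := by
        apply Finset.sum_le_sum; intro s _
        rw [abs_mul, abs_of_nonneg (hw s)]
        exact mul_le_mul_of_nonneg_left (hV s) (hw s)
    _ = M := by rw [← Finset.sum_mul, hw1, one_mul]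

/-- `lse` is bounded by `log |A|` plus a bound on `Q`. -/
lemma lse_abs_le (Qf : S → A → ℝ) (s : S) (B : ℝ) (hB : ∀ a, |Qf s a| ≤ B) :
    |lse Qf s| ≤ Real.log (Fintype.card A) + B := by
  have hcard : (1 : ℝ) ≤ Fintype.card A := by
    have := Fintype.card_pos (α := A)
    exact_mod_cast this
  have hlogA : 0 ≤ Real.log (Fintype.card A) := Real.log_nonneg hcard
  have hpos : 0 < ∑ a', Real.exp (Qf s a') :=
    Finset.sum_pos (fun a' _ => Real.exp_pos _) Finset.univ_nonempty
  rw [abs_le]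
  constructor
  · obtain ⟨a₀⟩ := (inferInstance : Nonempty A)
    have h1 : Real.exp (Qf s a₀) ≤ ∑ a', Real.exp (Qf s a') :=
      Finset.single_le_sum (fun a' _ => (Real.exp_pos _).le) (Finset.mem_univ a₀)
    have h2 : Qf s a₀ ≤ lse Qf s := by
      unfold lse
      calc Qf s a₀ = Real.log (Real.exp (Qf s a₀)) := (Real.log_exp _).symm
        _ ≤ Real.log (∑ a', Real.exp (Qf s a')) := Real.log_le_log (Real.exp_pos _) h1
    have h3 : -B ≤ Qf s a₀ := neg_le_of_abs_le (hB a₀)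
    linarith
  · unfold lse
    calc Real.log (∑ a', Real.exp (Qf s a'))
        ≤ Real.log (∑ _a' : A, Real.exp B) := by
          apply Real.log_le_log hpos
          exact Finset.sum_le_sum fun a' _ => Real.exp_le_exp.mpr (le_of_abs_le (hB a'))
      _ = Real.log ((Fintype.card A : ℝ) * Real.exp B) := by
          rw [Finset.sum_const, nsmul_eq_mul]
          simp
      _ = Real.log (Fintype.card A) + B := by
          rw [Real.log_mul (by positivity) (Real.exp_ne_zero _), Real.log_exp]

/-- Self-bounding property of the soft value function. -/
lemma value_abs_le {γ : ℝ} (hγ0 : 0 ≤ γ) (hγ1 : γ < 1)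
    (Ph : S → A → S → ℝ) (hPh : IsKernel Ph)
    (R : S → A → ℝ) (CRU : ℝ) (hR : ∀ s a, |R s a| ≤ CRU)
    (Qf : S → A → ℝ)
    (hQf : ∀ s a, Qf s a = R s a + γ * ∑ s', Ph s a s' * lse Qf s') :
    ∀ s, |lse Qf s| ≤ (CRU + Real.log (Fintype.card A)) / (1 - γ) := by
  set M : ℝ := Finset.univ.sup' Finset.univ_nonempty (fun s => |lse Qf s|) with hM
  have hle : ∀ s, |lse Qf s| ≤ M := fun s =>
    Finset.le_sup' (fun s => |lse Qf s|) (Finset.mem_univ s)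
  obtain ⟨s₀, _, hs₀⟩ := Finset.exists_mem_eq_sup' Finset.univ_nonempty
    (fun s => |lse Qf s|)
  have hQbound : ∀ s a, |Qf s a| ≤ CRU + γ * M := by
    intro s a
    rw [hQf s a]
    have h1 : |γ * ∑ s', Ph s a s' * lse Qf s'| ≤ γ * M := by
      rw [abs_mul, abs_of_nonneg hγ0]
      exact mul_le_mul_of_nonneg_left
        (abs_convex_le (Ph s a) (lse Qf) (hPh.1 s a) (hPh.2 s a) M hle) hγ0
    calc |R s a + γ * ∑ s', Ph s a s' * lse Qf s'|
        ≤ |R s a| + |γ * ∑ s', Ph s a s' * lse Qf s'| := abs_add_le _ _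
      _ ≤ CRU + γ * M := add_le_add (hR s a) h1
  have hMbound : M ≤ Real.log (Fintype.card A) + (CRU + γ * M) := by
    nth_rewrite 1 [show M = |lse Qf s₀| by rw [hM, hs₀]]
    exact lse_abs_le Qf s₀ (CRU + γ * M) (fun a => hQbound s₀ a)
  have hMfin : M ≤ (CRU + Real.log (Fintype.card A)) / (1 - γ) := by
    rw [le_div_iff₀ (by linarith)]
    nlinarith
  exact fun s => le_trans (hle s) hMfin


/-- **Key deterministic lemma**: the gap between the likelihood objective and the
surrogate objective is controlled by the model error on visited pairs. -/
lemma gap_abs_le {γ : ℝ} (hγ0 : 0 < γ) (hγ1 : γ < 1)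
    {P : S → A → S → ℝ} {pol : S → A → ℝ} {η : S → ℝ}
    (hP : IsKernel P) (hpol : IsPolicy pol) (hη : IsDist η)
    (Ph : S → A → S → ℝ) (hPh : IsKernel Ph)
    (R : S → A → ℝ) (CRU : ℝ) (hR : ∀ s a, |R s a| ≤ CRU)
    (Qf : S → A → ℝ)
    (hQf : ∀ s a, Qf s a = R s a + γ * ∑ s', Ph s a s' * lse Qf s')
    (κ : ℝ) (hκ : 0 ≤ κ)
    (herr : ∀ s a, 0 < visit γ P pol η s a →
      |∑ s', (Ph s a s' - P s a s') * lse Qf s'| ≤ κ) :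
    |discSum γ P pol η (fun s a => Real.log (softmax Qf s a))
      - (discSum γ P pol η R - ∑ s, η s * lse Qf s)| ≤ γ * κ / (1 - γ) := by
  set V : S → ℝ := lse Qf with hV
  set Cv' : ℝ := (CRU + Real.log (Fintype.card A)) / (1 - γ) with hCv'
  have hVb : ∀ s, |V s| ≤ Cv' := value_abs_le hγ0.le hγ1 Ph hPh R CRU hR Qf hQf
  have hCv'0 : 0 ≤ Cv' := le_trans (abs_nonneg _) (hVb (Classical.arbitrary S))
  have hCRU0 : 0 ≤ CRU := le_trans (abs_nonneg _) (hR (Classical.arbitrary S)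
    (Classical.arbitrary A))
  set g : S → A → ℝ := fun s a => γ * ∑ s', (Ph s a s' - P s a s') * V s' with hg
  set nh : S → A → ℝ := fun s a => (fun s => -V s) s - γ * ∑ s', P s a s' * (fun s => -V s) s'
    with hnh
  have hsplit : ∀ s a, ∑ s', (Ph s a s' - P s a s') * V s'
      = (∑ s', Ph s a s' * V s') - ∑ s', P s a s' * V s' := by
    intro s a
    rw [← Finset.sum_sub_distrib]
    exact Finset.sum_congr rfl fun s' _ => by ring
  have hgb : ∀ s a, |g s a| ≤ γ * (2 * Cv') := by
    intro s a
    rw [hg]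
    simp only []
    rw [abs_mul, abs_of_nonneg hγ0.le]
    refine mul_le_mul_of_nonneg_left ?_ hγ0.le
    rw [hsplit s a]
    calc |(∑ s', Ph s a s' * V s') - ∑ s', P s a s' * V s'|
        ≤ |∑ s', Ph s a s' * V s'| + |∑ s', P s a s' * V s'| := abs_sub _ _
      _ ≤ Cv' + Cv' := add_le_add
          (abs_convex_le (Ph s a) V (hPh.1 s a) (hPh.2 s a) Cv' hVb)
          (abs_convex_le (P s a) V (hP.1 s a) (hP.2 s a) Cv' hVb)
      _ = 2 * Cv' := by ring
  have hnhb : ∀ s a, |nh s a| ≤ (1 + γ) * Cv' := by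
    intro s a
    rw [hnh]
    simp only []
    have h1 : |∑ s', P s a s' * -V s'| ≤ Cv' := by
      refine abs_convex_le (P s a) (fun s => -V s) (hP.1 s a) (hP.2 s a) Cv' ?_
      intro s'; rw [abs_neg]; exact hVb s'
    calc |-V s - γ * ∑ s', P s a s' * -V s'|
        ≤ |(-V s)| + |γ * ∑ s', P s a s' * -V s'| := abs_sub _ _
      _ ≤ Cv' + γ * Cv' := by
          refine add_le_add (by rw [abs_neg]; exact hVb s) ?_
          rw [abs_mul, abs_of_nonneg hγ0.le]
          exact mul_le_mul_of_nonneg_left h1 hγ0.le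
      _ = (1 + γ) * Cv' := by ring
  have hgnhb : ∀ s a, |g s a + nh s a| ≤ γ * (2 * Cv') + (1 + γ) * Cv' := fun s a =>
    le_trans (abs_add_le _ _) (add_le_add (hgb s a) (hnhb s a))
  have hpoint : ∀ s a, Real.log (softmax Qf s a) = R s a + (g s a + nh s a) := by
    intro s a
    rw [log_softmax Qf s a, hQf s a]
    simp only [hg, hnh, hsplit s a]
    have : ∑ s', P s a s' * -V s' = -∑ s', P s a s' * V s' := by
      rw [← Finset.sum_neg_distrib]
      exact Finset.sum_congr rfl fun s' _ => by ring
    rw [this]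
    ring
  have hd1 : discSum γ P pol η (fun s a => Real.log (softmax Qf s a))
      = discSum γ P pol η (fun s a => R s a + (g s a + nh s a)) := by
    congr 1
    funext s a
    exact hpoint s a
  have hd2 : discSum γ P pol η (fun s a => R s a + (g s a + nh s a))
      = discSum γ P pol η R + discSum γ P pol η (fun s a => g s a + nh s a) :=
    discSum_add hγ0.le hγ1 hP hpol hη R (fun s a => g s a + nh s a) CRU
      (γ * (2 * Cv') + (1 + γ) * Cv') hR hgnhb
  have hd3 : discSum γ P pol η (fun s a => g s a + nh s a)
      = discSum γ P pol η g + discSum γ P pol η nh :=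
    discSum_add hγ0.le hγ1 hP hpol hη g nh (γ * (2 * Cv')) ((1 + γ) * Cv') hgb hnhb
  have hd4 : discSum γ P pol η nh = -∑ s, η s * V s := by
    rw [hnh, discSum_telescope hγ0.le hγ1 hP hpol hη (fun s => -V s)]
    rw [← Finset.sum_neg_distrib]
    exact Finset.sum_congr rfl fun s _ => by ring
  have hgbound : |discSum γ P pol η g| ≤ γ * κ / (1 - γ) := by
    refine discSum_bound hγ0 hγ1 hP hpol hη g (γ * κ) (by positivity) ?_
    intro s a hvis
    rw [hg]
    simp only []
    rw [abs_mul, abs_of_nonneg hγ0.le]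
    exact mul_le_mul_of_nonneg_left (herr s a hvis) hγ0.le
  have : discSum γ P pol η (fun s a => Real.log (softmax Qf s a))
      - (discSum γ P pol η R - ∑ s, η s * V s) = discSum γ P pol η g := by
    rw [hd1, hd2, hd3, hd4]
    ring
  rw [this]
  exact hgbound

end MDPLemmas


section Hoeff
open ProbabilityTheory

lemma bernoulli_D_pos {p : ℝ} (hp0 : 0 ≤ p) (hp1 : p ≤ 1) (x : ℝ) :
    0 < 1 - p + p * exp x := by
  rcases eq_or_lt_of_le hp0 with h | h
  · simp [← h]
  · have := exp_pos x; nlinarith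

lemma bernoulli_mgf_bound {p : ℝ} (hp0 : 0 ≤ p) (hp1 : p ≤ 1) (x : ℝ) :
    (1 - p) * exp (-(x * p)) + p * exp (x * (1 - p)) ≤ exp (x ^ 2 / 8) := by
  set D : ℝ → ℝ := fun y => 1 - p + p * exp y with hDdef
  have hDpos : ∀ y, 0 < D y := fun y => bernoulli_D_pos hp0 hp1 y
  set F : ℝ → ℝ := fun y => y ^ 2 / 8 + y * p - log (D y) with hFdef
  set G : ℝ → ℝ := fun y => y / 4 + p - p * exp y / D y with hGdef
  have hD : ∀ y, HasDerivAt D (p * exp y) y := by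
    intro y
    exact ((hasDerivAt_exp y).const_mul p).const_add (1 - p)
  have hF : ∀ y, HasDerivAt F (G y) y := by
    intro y
    have h1 : HasDerivAt (fun y : ℝ => y ^ 2 / 8 + y * p) (y / 4 + p) y := by
      have := ((hasDerivAt_pow 2 y).div_const 8).add ((hasDerivAt_id y).mul_const p)
      exact this.congr_deriv (by ring)
    have h2 : HasDerivAt (fun y => log (D y)) (p * exp y / D y) y :=
      (hD y).log (hDpos y).ne'
    exact h1.sub h2
  have hG : ∀ y, HasDerivAt G (1 / 4 - p * exp y * (1 - p) / (D y) ^ 2) y := by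
    intro y
    have h1 : HasDerivAt (fun y : ℝ => y / 4 + p) (1 / 4) y := by
      simpa using ((hasDerivAt_id y).div_const 4).add_const p
    have h2 : HasDerivAt (fun y => p * exp y / D y)
        ((p * exp y * D y - p * exp y * (p * exp y)) / (D y) ^ 2) y :=
      ((hasDerivAt_exp y).const_mul p).div (hD y) (hDpos y).ne'
    have : (p * exp y * D y - p * exp y * (p * exp y)) / (D y) ^ 2
        = p * exp y * (1 - p) / (D y) ^ 2 := by
      congr 1; simp only [hDdef]; ring
    rw [this] at h2
    exact h1.sub h2
  have hGderiv_nonneg : ∀ y, 0 ≤ 1 / 4 - p * exp y * (1 - p) / (D y) ^ 2 := by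
    intro y
    have hD2 : 0 < (D y) ^ 2 := pow_pos (hDpos y) 2
    rw [sub_nonneg, div_le_iff₀ hD2]
    have h := sq_nonneg (1 - p - p * exp y)
    have : (D y) ^ 2 = (1 - p + p * exp y) ^ 2 := rfl
    nlinarith [exp_pos y]
  have hGmono : Monotone G := by
    apply monotone_of_deriv_nonneg
    · intro y; exact (hG y).differentiableAt
    · intro y; rw [(hG y).deriv]; exact hGderiv_nonneg y
  have hG0 : G 0 = 0 := by
    simp only [hGdef, hDdef]
    rw [exp_zero]; field_simp; ring
  have hFderiv : ∀ y, deriv F y = G y := fun y => (hF y).deriv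
  have hFmono : MonotoneOn F (Set.Ici 0) := by
    apply monotoneOn_of_deriv_nonneg (convex_Ici 0)
      (fun y _ => (hF y).differentiableAt.continuousAt.continuousWithinAt)
    · intro y hy
      exact ((hF y).differentiableAt.differentiableWithinAt)
    · intro y hy
      rw [interior_Ici] at hy
      rw [hFderiv y, ← hG0]
      exact hGmono hy.le
  have hFanti : AntitoneOn F (Set.Iic 0) := by
    apply antitoneOn_of_deriv_nonpos (convex_Iic 0)
      (fun y _ => (hF y).differentiableAt.continuousAt.continuousWithinAt)
    · intro y hy
      exact ((hF y).differentiableAt.differentiableWithinAt)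
    · intro y hy
      rw [interior_Iic] at hy
      rw [hFderiv y, ← hG0]
      exact hGmono hy.le
  have hF0 : F 0 = 0 := by
    simp only [hFdef, hDdef]
    norm_num
  have hFnonneg : ∀ y, 0 ≤ F y := by
    intro y
    rcases le_total 0 y with h | h
    · rw [← hF0]; exact hFmono Set.self_mem_Ici h h
    · rw [← hF0]; exact hFanti h Set.self_mem_Iic h
  have hlog : log (D x) ≤ x ^ 2 / 8 + x * p := by
    have := hFnonneg x
    simp only [hFdef] at this
    linarith
  have hDle : D x ≤ exp (x ^ 2 / 8 + x * p) := by
    rw [← Real.exp_log (hDpos x)]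
    exact exp_le_exp.mpr hlog
  have key : exp (-(x * p)) * D x ≤ exp (x ^ 2 / 8) := by
    calc exp (-(x * p)) * D x ≤ exp (-(x * p)) * exp (x ^ 2 / 8 + x * p) := by
          exact mul_le_mul_of_nonneg_left hDle (exp_nonneg _)
      _ = exp (x ^ 2 / 8) := by rw [← exp_add]; ring_nf
  calc (1 - p) * exp (-(x * p)) + p * exp (x * (1 - p))
      = exp (-(x * p)) * D x := by
        simp only [hDdef]
        rw [show x * (1 - p) = -(x * p) + x by ring, exp_add]
        ring
    _ ≤ exp (x ^ 2 / 8) := key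


lemma hoeffding_tail {Ωm ι : Type} [MeasureSpace Ωm] [IsProbabilityMeasure (ℙ : Measure Ωm)]
    (W : ι → Ωm → ℝ) (s : Finset ι) (hs : s.Nonempty)
    (hmeas : ∀ q, Measurable (W q))
    (hbdd : ∀ q ω, |W q ω| ≤ 1)
    (hindep : ProbabilityTheory.iIndepFun W ℙ)
    (hmgf : ∀ t : ℝ, ∀ q ∈ s, ProbabilityTheory.mgf (W q) ℙ t ≤ Real.exp (t ^ 2 / 8))
    (a : ℝ) (ha : 0 < a) :
    ℙ {ω | a ≤ ∑ q ∈ s, W q ω} ≤ ENNReal.ofReal (Real.exp (-2 * a ^ 2 / s.card)) := by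
  set n : ℝ := (s.card : ℝ) with hn
  have hnpos : 0 < n := by rw [hn]; exact_mod_cast hs.card_pos
  set t : ℝ := 4 * a / n with ht
  have htpos : 0 < t := by positivity
  have hint : ∀ q, Integrable (fun ω => exp (t * W q ω)) ℙ := by
    intro q
    refine Integrable.mono' (integrable_const (exp |t|))
      ((measurable_exp.comp ((hmeas q).const_mul t)).aestronglyMeasurable) ?_
    filter_upwards with ω
    rw [norm_of_nonneg (exp_nonneg _)]
    apply exp_le_exp.mpr
    calc t * W q ω ≤ |t * W q ω| := le_abs_self _
      _ = |t| * |W q ω| := abs_mul t _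
      _ ≤ |t| * 1 := by gcongr; exact hbdd q ω
      _ = |t| := mul_one _
  have hintsum : Integrable (fun ω => exp (t * (∑ q ∈ s, W q) ω)) ℙ :=
    hindep.integrable_exp_mul_sum hmeas (fun i _ => hint i)
  have hchern := measure_ge_le_exp_mul_mgf (X := ∑ q ∈ s, W q) (μ := ℙ) a htpos.le hintsum
  have hmgfsum : mgf (∑ q ∈ s, W q) ℙ t = ∏ q ∈ s, mgf (W q) ℙ t :=
    hindep.mgf_sum hmeas s
  have hprod : ∏ q ∈ s, mgf (W q) ℙ t ≤ exp (n * (t ^ 2 / 8)) := by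
    calc ∏ q ∈ s, mgf (W q) ℙ t ≤ ∏ _q ∈ s, exp (t ^ 2 / 8) :=
          Finset.prod_le_prod (fun q _ => mgf_nonneg) (fun q hq => hmgf t q hq)
      _ = exp (t ^ 2 / 8) ^ s.card := Finset.prod_const _
      _ = exp (n * (t ^ 2 / 8)) := by rw [← exp_nat_mul]
  have hset : {ω | a ≤ (∑ q ∈ s, W q) ω} = {ω | a ≤ ∑ q ∈ s, W q ω} := by
    simp [Finset.sum_apply]
  rw [hset] at hchern
  have hexp : exp (-t * a) * exp (n * (t ^ 2 / 8)) = exp (-2 * a ^ 2 / n) := by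
    rw [← exp_add]
    congr 1
    rw [ht]; field_simp
    ring
  have hfinal : (ℙ {ω | a ≤ ∑ q ∈ s, W q ω}).toReal ≤ exp (-2 * a ^ 2 / n) := by
    calc (ℙ {ω | a ≤ ∑ q ∈ s, W q ω}).toReal
        ≤ exp (-t * a) * mgf (∑ q ∈ s, W q) ℙ t := hchern
      _ ≤ exp (-t * a) * exp (n * (t ^ 2 / 8)) := by
          rw [hmgfsum]; exact mul_le_mul_of_nonneg_left hprod (exp_nonneg _)
      _ = exp (-2 * a ^ 2 / n) := hexp
  rw [ENNReal.le_ofReal_iff_toReal_le (measure_ne_top ℙ _) (exp_nonneg _)]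
  exact hfinal



lemma integral_comp_fintype {Ωm S : Type} [MeasureSpace Ωm]
    [IsProbabilityMeasure (ℙ : Measure Ωm)]
    [Fintype S] [MeasurableSpace S] [MeasurableSingletonClass S]
    (Y : Ωm → S) (hY : Measurable Y) (f : S → ℝ) :
    ∫ ω, f (Y ω) ∂ℙ = ∑ s', (ℙ {ω | Y ω = s'}).toReal * f s' := by
  classical
  have hdecomp : ∀ ω, f (Y ω) = ∑ s', if Y ω = s' then f s' else 0 := by
    intro ω
    rw [Finset.sum_ite_eq Finset.univ (Y ω) f, if_pos (Finset.mem_univ _)]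
  have hmeasA : ∀ s' : S, MeasurableSet {ω | Y ω = s'} := fun s' =>
    hY (measurableSet_singleton s')
  have hint : ∀ s' : S, Integrable (fun ω => if Y ω = s' then f s' else 0) ℙ := by
    intro s'
    have : (fun ω => if Y ω = s' then f s' else 0)
        = Set.indicator {ω | Y ω = s'} (fun _ => f s') := by
      funext ω
      rw [Set.indicator_apply]
      rfl
    rw [this]
    exact (integrable_const (f s')).indicator (hmeasA s')
  calc ∫ ω, f (Y ω) ∂ℙ = ∫ ω, ∑ s', if Y ω = s' then f s' else 0 ∂ℙ := by
        congr 1; funext ω; exact hdecomp ω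
    _ = ∑ s', ∫ ω, (if Y ω = s' then f s' else 0) ∂ℙ :=
        integral_finset_sum Finset.univ (fun s' _ => hint s')
    _ = ∑ s', (ℙ {ω | Y ω = s'}).toReal * f s' := by
        refine Finset.sum_congr rfl fun s' _ => ?_
        have : (fun ω => if Y ω = s' then f s' else 0)
            = Set.indicator {ω | Y ω = s'} (fun _ => f s') := by
          funext ω; rw [Set.indicator_apply]; rfl
        rw [this, integral_indicator_const _ (hmeasA s'), smul_eq_mul]; rfl

lemma mgf_indicator_le {Ωm S : Type} [MeasureSpace Ωm]
    [IsProbabilityMeasure (ℙ : Measure Ωm)]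
    [Fintype S] [MeasurableSpace S] [MeasurableSingletonClass S]
    (Y : Ωm → S) (hY : Measurable Y) (Pr : S → ℝ)
    (hPr0 : ∀ s, 0 ≤ Pr s) (hPr1 : ∑ s, Pr s = 1)
    (hlaw : ∀ s', ℙ {ω | Y ω = s'} = ENNReal.ofReal (Pr s'))
    (B : Finset S) [DecidablePred (· ∈ B)] (t : ℝ) :
    mgf (fun ω => (if Y ω ∈ B then (1 : ℝ) else 0) - ∑ s' ∈ B, Pr s') ℙ t
      ≤ Real.exp (t ^ 2 / 8) := by
  classical
  set μB : ℝ := ∑ s' ∈ B, Pr s' with hμB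
  have hμ0 : 0 ≤ μB := Finset.sum_nonneg fun s' _ => hPr0 s'
  have hμ1 : μB ≤ 1 := by
    rw [hμB, ← hPr1]
    exact Finset.sum_le_sum_of_subset_of_nonneg (Finset.subset_univ B)
      (fun s' _ _ => hPr0 s')
  have hcalc : mgf (fun ω => (if Y ω ∈ B then (1 : ℝ) else 0) - μB) ℙ t
      = ∑ s', Pr s' * Real.exp (t * ((if s' ∈ B then (1 : ℝ) else 0) - μB)) := by
    calc (∫ ω, Real.exp (t * ((if Y ω ∈ B then (1 : ℝ) else 0) - μB)) ∂ℙ)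
        = ∫ ω, (fun s' => Real.exp (t * ((if s' ∈ B then (1 : ℝ) else 0) - μB))) (Y ω) ∂ℙ :=
          rfl
      _ = ∑ s', (ℙ {ω | Y ω = s'}).toReal
            * (fun s' => Real.exp (t * ((if s' ∈ B then (1 : ℝ) else 0) - μB))) s' :=
          integral_comp_fintype Y hY (fun s' => Real.exp (t * ((if s' ∈ B then (1 : ℝ) else 0) - μB)))
      _ = ∑ s', (ℙ {ω | Y ω = s'}).toReal
            * Real.exp (t * ((if s' ∈ B then (1 : ℝ) else 0) - μB)) := rfl
      _ = ∑ s', Pr s' * Real.exp (t * ((if s' ∈ B then (1 : ℝ) else 0) - μB)) := by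
          refine Finset.sum_congr rfl fun s' _ => ?_
          rw [hlaw s', ENNReal.toReal_ofReal (hPr0 s')]
  rw [hcalc]
  have hsplit : ∑ s', Pr s' * Real.exp (t * ((if s' ∈ B then (1 : ℝ) else 0) - μB))
      = μB * Real.exp (t * (1 - μB)) + (1 - μB) * Real.exp (-(t * μB)) := by
    rw [← Finset.sum_filter_add_sum_filter_not Finset.univ (· ∈ B)]
    have h1 : ∀ s' ∈ Finset.univ.filter (· ∈ B),
        Pr s' * Real.exp (t * ((if s' ∈ B then (1 : ℝ) else 0) - μB))
        = Pr s' * Real.exp (t * (1 - μB)) := by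
      intro s' hs'
      rw [if_pos (Finset.mem_filter.mp hs').2]
    have h2 : ∀ s' ∈ Finset.univ.filter (¬ · ∈ B),
        Pr s' * Real.exp (t * ((if s' ∈ B then (1 : ℝ) else 0) - μB))
        = Pr s' * Real.exp (-(t * μB)) := by
      intro s' hs'
      rw [if_neg (Finset.mem_filter.mp hs').2]
      ring_nf
    rw [Finset.sum_congr rfl h1, Finset.sum_congr rfl h2, ← Finset.sum_mul, ← Finset.sum_mul]
    have hBf : Finset.univ.filter (· ∈ B) = B := by
      ext s'; simp
    have hs1 : ∑ s' ∈ Finset.univ.filter (· ∈ B), Pr s' = μB := by rw [hBf, hμB]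
    have hs2 : ∑ s' ∈ Finset.univ.filter (¬ · ∈ B), Pr s' = 1 - μB := by
      have h := Finset.sum_filter_add_sum_filter_not Finset.univ (· ∈ B) Pr
      rw [hs1, hPr1] at h
      linarith
    rw [hs1, hs2]
  rw [hsplit]
  have := bernoulli_mgf_bound hμ0 hμ1 t
  linarith


lemma l1_of_partial {S : Type} [Fintype S] (SE : Finset S) (d : S → ℝ)
    (hd0 : ∀ s' ∉ SE, d s' = 0) (hdsum : ∑ s', d s' = 0)
    (τ : ℝ) (hB : ∀ B ⊆ SE, ∑ s' ∈ B, d s' < τ) :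
    ∑ s', |d s'| ≤ 2 * τ := by
  classical
  have hSEd : ∑ s' ∈ SE, d s' = 0 := by
    rw [← hdsum]
    exact Finset.sum_subset (Finset.subset_univ SE) (fun s _ hs => hd0 s hs)
  have habs : ∑ s', |d s'| = ∑ s' ∈ SE, |d s'| := by
    refine (Finset.sum_subset (Finset.subset_univ SE) ?_).symm
    intro s _ hs
    rw [hd0 s hs, abs_zero]
  set Bp : Finset S := SE.filter (fun s' => 0 < d s') with hBp
  have h1 : ∑ s' ∈ Bp, d s' < τ := hB Bp (Finset.filter_subset _ _)
  have hsplitd := Finset.sum_filter_add_sum_filter_not SE (fun s' => 0 < d s') d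
  have hsplita := Finset.sum_filter_add_sum_filter_not SE (fun s' => 0 < d s') (fun s' => |d s'|)
  have he1 : ∑ s' ∈ SE.filter (fun s' => 0 < d s'), |d s'| = ∑ s' ∈ Bp, d s' := by
    refine Finset.sum_congr rfl fun s' hs' => ?_
    exact abs_of_pos (Finset.mem_filter.mp hs').2
  have he2 : ∑ s' ∈ SE.filter (fun s' => ¬ 0 < d s'), |d s'|
      = -∑ s' ∈ SE.filter (fun s' => ¬ 0 < d s'), d s' := by
    rw [← Finset.sum_neg_distrib]
    refine Finset.sum_congr rfl fun s' hs' => ?_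
    exact abs_of_nonpos (le_of_not_gt (Finset.mem_filter.mp hs').2)
  have h2 : ∑ s' ∈ SE.filter (fun s' => ¬ 0 < d s'), d s' = -∑ s' ∈ Bp, d s' := by
    rw [hBp]; linarith [hsplitd, hSEd]
  rw [habs]
  rw [← hsplita, he1, he2, h2]
  linarith

set_option maxHeartbeats 1000000 in
lemma final_numeric {δ L c e K' : ℝ} (K m : ℕ) (hm : 2 ≤ m) (hmK : m ≤ K)
    (hδ0 : 0 < δ) (hδ1 : δ < 1)
    (hK' : K' = (K : ℝ))
    (hL : L = Real.log (K' / δ))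
    (hc : c = 1 + 1 / Real.sqrt L)
    (he : c ^ 2 * m * L / 2 ≤ e) :
    (K : ℝ) * 2 ^ m * Real.exp (-e) ≤ δ := by
  have hK2 : (2 : ℝ) ≤ K := by exact_mod_cast le_trans hm hmK
  have hKpos : (0 : ℝ) < K := by linarith
  have hL2 : Real.log 2 ≤ L := by
    rw [hL, hK']
    apply Real.log_le_log (by norm_num)
    rw [le_div_iff₀ hδ0]
    nlinarith
  have hLpos : 0 < L := lt_of_lt_of_le (Real.log_pos (by norm_num)) hL2
  set a : ℝ := Real.sqrt L with ha
  have ha2 : a ^ 2 = L := Real.sq_sqrt hLpos.le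
  have hapos : 0 < a := Real.sqrt_pos.mpr hLpos
  have ha8 : (0.8 : ℝ) ≤ a := by
    have h064 : (0.64 : ℝ) ≤ L := by nlinarith [Real.log_two_gt_d9, hL2]
    have hs := Real.sqrt_le_sqrt h064
    rw [show (0.64 : ℝ) = 0.8 ^ 2 by norm_num,
      Real.sqrt_sq (by norm_num : (0 : ℝ) ≤ 0.8)] at hs
    exact hs
  have hcL : c ^ 2 * L = (a + 1) ^ 2 := by
    rw [hc, ← ha2]
    field_simp
  have hemL : (m : ℝ) * (a + 1) ^ 2 / 2 ≤ e := by
    calc (m : ℝ) * (a + 1) ^ 2 / 2 = c ^ 2 * m * L / 2 := by rw [← hcL]; ring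
      _ ≤ e := he
  have hmreal : (2 : ℝ) ≤ m := by exact_mod_cast hm
  have hlog2 : Real.log 2 < 0.6931471808 := Real.log_two_lt_d9
  have hlog2pos : 0 < Real.log 2 := Real.log_pos (by norm_num)
  -- key inequality : e ≥ L + m log 2
  have hkey : L + (m : ℝ) * Real.log 2 ≤ e := by
    have h1 : 0 ≤ (a + 1) ^ 2 / 2 - Real.log 2 := by nlinarith
    have h2 : (m : ℝ) * ((a + 1) ^ 2 / 2 - Real.log 2) ≥ 2 * ((a + 1) ^ 2 / 2 - Real.log 2) := by
      nlinarith
    have h4 : 0 ≤ 2 * a + 1 - 2 * Real.log 2 := by nlinarith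
    calc L + (m : ℝ) * Real.log 2 = a ^ 2 + (m : ℝ) * Real.log 2 := by rw [ha2]
      _ ≤ 2 * ((a + 1) ^ 2 / 2 - Real.log 2) + (m : ℝ) * Real.log 2 := by nlinarith
      _ ≤ (m : ℝ) * ((a + 1) ^ 2 / 2 - Real.log 2) + (m : ℝ) * Real.log 2 := by linarith
      _ = (m : ℝ) * (a + 1) ^ 2 / 2 := by ring
      _ ≤ e := hemL
  have hpow : (0 : ℝ) < (K : ℝ) * 2 ^ m := by positivity
  have hlogeq : Real.log (δ / ((K : ℝ) * 2 ^ m))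
      = Real.log δ - (Real.log K + (m : ℝ) * Real.log 2) := by
    rw [Real.log_div (ne_of_gt hδ0) (ne_of_gt hpow), Real.log_mul (ne_of_gt hKpos)
      (by positivity), Real.log_pow]
  have hLeq : L = Real.log K - Real.log δ := by
    rw [hL, hK', Real.log_div (ne_of_gt hKpos) (ne_of_gt hδ0)]
  have hexble : Real.exp (-e) ≤ δ / ((K : ℝ) * 2 ^ m) := by
    rw [← Real.exp_log (show (0 : ℝ) < δ / ((K : ℝ) * 2 ^ m) by positivity)]
    apply Real.exp_le_exp.mpr
    rw [hlogeq]
    linarith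
  calc (K : ℝ) * 2 ^ m * Real.exp (-e) ≤ (K : ℝ) * 2 ^ m * (δ / ((K : ℝ) * 2 ^ m)) :=
        mul_le_mul_of_nonneg_left hexble (by positivity)
    _ = δ := by field_simp

end Hoeff

/-- **Theorem 2, likelihood optimality gap.**
If every expert-visited pair is sampled `N` times i.i.d. from `P(·|s,a)`, `P̂` is the
empirical estimate, and the total number of transition samples `N |Ω|` is at least
`(4 γ² C_v² c² |Ω| |Sᴱ| / ((1-γ)² ε²)) ln(|Ω|/δ)` with `c = 1 + 1/√(ln(|Ω|/δ))` and
`C_v = (C_r + C_u + log|A|)/(1-γ)`, then with probability at least `1 - δ`,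
`L(θ*) - L(θ̂) ≤ ε`, where `θ*` maximizes the likelihood objective `L` and `θ̂`
maximizes the surrogate objective `L̂` (both computed under the random model `P̂`). -/
theorem stmt5 {S A : Type} [Fintype S] [Fintype A] [Nonempty S] [Nonempty A]
    [DecidableEq S] [MeasurableSpace S] [MeasurableSingletonClass S] (d : ℕ)
    (γ : ℝ) (hγ : γ ∈ Set.Ioo (0 : ℝ) 1)
    (P : S → A → S → ℝ) (hP : IsKernel P)
    (η : S → ℝ) (hη : IsDist η)
    (piE : S → A → ℝ) (hpiE : IsPolicy piE)
    (r : S → A → EuclideanSpace ℝ (Fin d) → ℝ) (U : S → A → ℝ)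
    (Cr Cu : ℝ) (hCr : 0 < Cr) (hCu : 0 < Cu)
    (hr : ∀ s a θ, |r s a θ| ≤ Cr) (hU : ∀ s a, |U s a| ≤ Cu)
    (hsupp : ∀ p ∈ expertPairs γ P piE η, ∀ s',
      0 < P p.1 p.2 s' → s' ∈ expertStates γ P piE η)
    (Ωm : Type) [MeasureSpace Ωm] [IsProbabilityMeasure (ℙ : Measure Ωm)]
    (N : ℕ) (hN : 0 < N)
    (X : S × A → Fin N → Ωm → S) (hXmeas : ∀ p i, Measurable (X p i))
    (hindep : ProbabilityTheory.iIndepFun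
      (fun (q : (S × A) × Fin N) ω => X q.1 q.2 ω) ℙ)
    (hlaw : ∀ p ∈ expertPairs γ P piE η, ∀ (i : Fin N) (s' : S),
      ℙ {ω | X p i ω = s'} = ENNReal.ofReal (P p.1 p.2 s'))
    (Phat : Ωm → S → A → S → ℝ) (hPhatK : ∀ ω, IsKernel (Phat ω))
    (hemp : ∀ p ∈ expertPairs γ P piE η, ∀ (ω : Ωm) (s' : S),
      Phat ω p.1 p.2 s' = ((Finset.univ.filter fun i : Fin N => X p i ω = s').card : ℝ) / N)
    (Q : Ωm → EuclideanSpace ℝ (Fin d) → S → A → ℝ)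
    (hQ : ∀ ω θ s a, Q ω θ s a = r s a θ + U s a + γ * ∑ s', Phat ω s a s' * lse (Q ω θ) s')
    (δ ε : ℝ) (hδ : δ ∈ Set.Ioo (0 : ℝ) 1) (hε : ε ∈ Set.Ioo (0 : ℝ) 2)
    (c : ℝ) (hc : c = 1 + 1 / Real.sqrt (Real.log ((expertPairs γ P piE η).card / δ)))
    (hsamp : 4 * γ ^ 2 * ((Cr + Cu + Real.log (Fintype.card A)) / (1 - γ)) ^ 2 * c ^ 2 *
          (expertPairs γ P piE η).card * (expertStates γ P piE η).card /
          ((1 - γ) ^ 2 * ε ^ 2) * Real.log ((expertPairs γ P piE η).card / δ) ≤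
        (N : ℝ) * (expertPairs γ P piE η).card)
    (θstar θhat : Ωm → EuclideanSpace ℝ (Fin d))
    (hstar : ∀ ω θ,
      discSum γ P piE η (fun s a => Real.log (softmax (Q ω θ) s a)) ≤
        discSum γ P piE η (fun s a => Real.log (softmax (Q ω (θstar ω)) s a)))
    (hhat : ∀ ω θ,
      (discSum γ P piE η (fun s a => r s a θ + U s a) - ∑ s, η s * lse (Q ω θ) s) ≤
        (discSum γ P piE η (fun s a => r s a (θhat ω) + U s a) -
          ∑ s, η s * lse (Q ω (θhat ω)) s)) :
    ENNReal.ofReal (1 - δ) ≤ ℙ {ω |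
      discSum γ P piE η (fun s a => Real.log (softmax (Q ω (θstar ω)) s a)) -
          discSum γ P piE η (fun s a => Real.log (softmax (Q ω (θhat ω)) s a)) ≤ ε} := by
  classical
  obtain ⟨hγ0, hγ1⟩ := hγ
  obtain ⟨hδ0, hδ1⟩ := hδ
  obtain ⟨hε0, hε2⟩ := hε
  set Ω' : Finset (S × A) := expertPairs γ P piE η with hΩ'
  set SE : Finset S := expertStates γ P piE η with hSEdef
  have hmemΩ : ∀ p : S × A, p ∈ Ω' ↔ 0 < visit γ P piE η p.1 p.2 := by
    intro p; rw [hΩ']; unfold expertPairs; simp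
  have hmemSE : ∀ s : S, s ∈ SE ↔ 0 < ∑ a, visit γ P piE η s a := by
    intro s; rw [hSEdef]; unfold expertStates; simp
  have h1γ : 0 < 1 - γ := by linarith
  have hvis0 : ∀ s a, 0 ≤ visit γ P piE η s a := by
    intro s a
    unfold visit
    apply mul_nonneg (mul_nonneg h1γ.le (hpiE.1 s a))
    apply tsum_nonneg
    intro t
    exact mul_nonneg (pow_nonneg hγ0.le t) (stateDist_nonneg hP hpiE hη t s)
  have hΩne : Ω'.Nonempty := by
    obtain ⟨s0, hs0⟩ : ∃ s, 0 < η s := by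
      by_contra h
      push_neg at h
      have : ∑ s, η s ≤ 0 := Finset.sum_nonpos (fun i _ => h i)
      rw [hη.2] at this; linarith
    obtain ⟨a0, ha0⟩ : ∃ a, 0 < piE s0 a := by
      by_contra h
      push_neg at h
      have : ∑ a, piE s0 a ≤ 0 := Finset.sum_nonpos (fun i _ => h i)
      rw [hpiE.2 s0] at this; linarith
    refine ⟨(s0, a0), (hmemΩ _).mpr ?_⟩
    exact visit_pos_of_weight hγ0 hγ1 hP hpiE hη (t := 0) (mul_pos hs0 ha0)
  have hK1 : 1 ≤ Ω'.card := hΩne.card_pos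
  have hfstSE : ∀ p ∈ Ω', p.1 ∈ SE := by
    intro p hp
    rw [hmemSE]
    have h := (hmemΩ p).mp hp
    have hsum : visit γ P piE η p.1 p.2 ≤ ∑ a, visit γ P piE η p.1 a :=
      Finset.single_le_sum (fun a _ => hvis0 p.1 a) (Finset.mem_univ p.2)
    linarith
  have hSEne : SE.Nonempty := ⟨hΩne.choose.1, hfstSE _ hΩne.choose_spec⟩
  have hm1 : 1 ≤ SE.card := hSEne.card_pos
  have hmK : SE.card ≤ Ω'.card := by
    have hex : ∀ s ∈ SE, ∃ a, 0 < visit γ P piE η s a := by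
      intro s hs
      by_contra h
      push_neg at h
      have h1 : ∑ a, visit γ P piE η s a ≤ 0 := Finset.sum_nonpos (fun i _ => h i)
      have h2 := (hmemSE s).mp hs
      linarith
    apply Finset.card_le_card_of_injOn
      (fun s => (s, if h : ∃ a, 0 < visit γ P piE η s a then h.choose else Classical.arbitrary A))
    · intro s hs
      rw [Finset.mem_coe, hmemΩ]
      simp only [dif_pos (hex s hs)]
      exact (hex s hs).choose_spec
    · intro s1 _ s2 _ h
      exact congrArg Prod.fst h
  -- constants
  set Cv : ℝ := (Cr + Cu + Real.log (Fintype.card A)) / (1 - γ) with hCv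
  have hlogA : 0 ≤ Real.log (Fintype.card A) :=
    Real.log_nonneg (by exact_mod_cast Fintype.card_pos (α := A))
  have hCv0 : 0 < Cv := by
    rw [hCv]; apply div_pos; linarith; linarith
  set κ : ℝ := ε * (1 - γ) / (2 * γ) with hκ
  have hκ0 : 0 < κ := by
    rw [hκ]; apply div_pos (mul_pos hε0 h1γ); linarith
  set τ : ℝ := κ / (2 * Cv) with hτ
  have hτ0 : 0 < τ := by
    rw [hτ]; apply div_pos hκ0; linarith
  have hRb : ∀ θ : EuclideanSpace ℝ (Fin d), ∀ s a, |r s a θ + U s a| ≤ Cr + Cu := fun θ s a =>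
    le_trans (abs_add_le _ _) (add_le_add (hr s a θ) (hU s a))
  have hVb : ∀ ω θ s, |lse (Q ω θ) s| ≤ Cv := by
    intro ω θ s
    have h := value_abs_le hγ0.le hγ1 (Phat ω) (hPhatK ω)
      (fun s a => r s a θ + U s a) (Cr + Cu) (fun s a => hRb θ s a) (Q ω θ) (hQ ω θ) s
    rw [← hCv] at h
    exact h
  -- the good event
  set Good : Set Ωm := {ω | ∀ p ∈ Ω', ∀ V : S → ℝ, (∀ s, |V s| ≤ Cv) →
    |∑ s', (Phat ω p.1 p.2 s' - P p.1 p.2 s') * V s'| ≤ κ} with hGood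
  -- Step A : Good is included in the target event
  have hsubGood : Good ⊆ {ω |
      discSum γ P piE η (fun s a => Real.log (softmax (Q ω (θstar ω)) s a)) -
        discSum γ P piE η (fun s a => Real.log (softmax (Q ω (θhat ω)) s a)) ≤ ε} := by
    intro ω hω
    simp only [hGood, Set.mem_setOf_eq] at hω
    simp only [Set.mem_setOf_eq]
    have hgap : ∀ θ : EuclideanSpace ℝ (Fin d),
        |discSum γ P piE η (fun s a => Real.log (softmax (Q ω θ) s a))
          - (discSum γ P piE η (fun s a => r s a θ + U s a)
            - ∑ s, η s * lse (Q ω θ) s)| ≤ ε / 2 := by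
      intro θ
      have herr : ∀ s a, 0 < visit γ P piE η s a →
          |∑ s', (Phat ω s a s' - P s a s') * lse (Q ω θ) s'| ≤ κ := by
        intro s a hv
        exact hω (s, a) ((hmemΩ (s, a)).mpr hv) (lse (Q ω θ)) (hVb ω θ)
      have h := gap_abs_le hγ0 hγ1 hP hpiE hη (Phat ω) (hPhatK ω)
        (fun s a => r s a θ + U s a) (Cr + Cu) (hRb θ) (Q ω θ) (hQ ω θ) κ hκ0.le herr
      have heq : γ * κ / (1 - γ) = ε / 2 := by
        rw [hκ]
        field_simp
      rwa [heq] at h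
    have h1 := abs_le.mp (hgap (θstar ω))
    have h2 := abs_le.mp (hgap (θhat ω))
    have h3 := hhat ω (θstar ω)
    linarith [h1.1, h1.2, h2.1, h2.2]
  -- Step B : probability of the bad event
  set B0 : Set Ωm := ⋃ p ∈ Ω', ⋃ i : Fin N, {ω | X p i ω ∉ SE} with hB0
  have hPoff : ∀ p ∈ Ω', ∀ s', s' ∉ SE → P p.1 p.2 s' = 0 := by
    intro p hp s' hs'
    by_contra h
    have hpos : 0 < P p.1 p.2 s' := lt_of_le_of_ne (hP.1 _ _ _) (Ne.symm h)
    exact hs' (hsupp p hp s' hpos)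
  have hB0null : ℙ B0 = 0 := by
    have h1 : ∀ p ∈ Ω', ∀ i : Fin N, ℙ {ω | X p i ω ∉ SE} = 0 := by
      intro p hp i
      have hsub : {ω | X p i ω ∉ SE}
          ⊆ ⋃ s' ∈ Finset.univ.filter (· ∉ SE), {ω | X p i ω = s'} := by
        intro ω hω
        refine Set.mem_iUnion₂.mpr ⟨X p i ω, ?_, rfl⟩
        simp only [Finset.mem_filter, Finset.mem_univ, true_and]
        exact hω
      refine le_antisymm (le_trans (measure_mono hsub) ?_) zero_le
      refine le_trans (measure_biUnion_finset_le _ _) ?_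
      have hz : ∀ s' ∈ Finset.univ.filter (· ∉ SE), ℙ {ω | X p i ω = s'} = 0 := by
        intro s' hs'
        rw [hlaw p hp i s', hPoff p hp s' (by simpa using hs'), ENNReal.ofReal_zero]
      rw [Finset.sum_congr rfl hz, Finset.sum_const_zero]
    have h2 : ∀ p ∈ Ω', ℙ (⋃ i : Fin N, {ω | X p i ω ∉ SE}) = 0 := by
      intro p hp
      refine le_antisymm (le_trans (measure_iUnion_le _) ?_) zero_le
      rw [tsum_congr (h1 p hp), tsum_zero]
    refine le_antisymm (le_trans (measure_biUnion_finset_le Ω' _) ?_) zero_le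
    rw [Finset.sum_congr rfl h2, Finset.sum_const_zero]
  set E : S × A → Finset S → Set Ωm :=
    fun p B => {ω | τ ≤ ∑ s' ∈ B, (Phat ω p.1 p.2 s' - P p.1 p.2 s')} with hE
  have hPhatOff : ∀ (ω : Ωm), ∀ p ∈ Ω', (∀ i, X p i ω ∈ SE) →
      ∀ s' ∉ SE, Phat ω p.1 p.2 s' = 0 := by
    intro ω p hp hin s' hs'
    rw [hemp p hp ω s']
    have hempty : Finset.univ.filter (fun i : Fin N => X p i ω = s') = ∅ := by
      rw [Finset.filter_eq_empty_iff]
      intro i _ he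
      exact hs' (he ▸ hin i)
    rw [hempty]
    simp
  have hdtot : ∀ (ω : Ωm), ∀ p ∈ Ω',
      ∑ s', (Phat ω p.1 p.2 s' - P p.1 p.2 s') = 0 := by
    intro ω p hp
    rw [Finset.sum_sub_distrib, (hPhatK ω).2, hP.2]
    ring
  have hdsum0 : ∀ (ω : Ωm), ∀ p ∈ Ω', (∀ i, X p i ω ∈ SE) →
      ∑ s' ∈ SE, (Phat ω p.1 p.2 s' - P p.1 p.2 s') = 0 := by
    intro ω p hp hin
    rw [← hdtot ω p hp]
    exact Finset.sum_subset (Finset.subset_univ SE) (fun s' _ hs' => by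
      rw [hPhatOff ω p hp hin s' hs', hPoff p hp s' hs']; ring)
  -- inclusion of the bad event
  have hGoodc : Goodᶜ ⊆ B0 ∪ ⋃ p ∈ Ω', ⋃ B ∈ SE.powerset, E p B := by
    intro ω hω
    by_contra hcon
    rw [Set.mem_union] at hcon
    push_neg at hcon
    obtain ⟨hnB0, hnE⟩ := hcon
    apply hω
    have hin : ∀ p ∈ Ω', ∀ i, X p i ω ∈ SE := by
      intro p hp i
      by_contra h
      exact hnB0 (Set.mem_iUnion₂.mpr ⟨p, hp, Set.mem_iUnion.mpr ⟨i, h⟩⟩)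
    intro p hp V hVle
    have hBlt : ∀ B ⊆ SE, ∑ s' ∈ B, (Phat ω p.1 p.2 s' - P p.1 p.2 s') < τ := by
      intro B hBsub
      by_contra h
      push_neg at h
      exact hnE (Set.mem_iUnion₂.mpr ⟨p, hp,
        Set.mem_iUnion₂.mpr ⟨B, Finset.mem_powerset.mpr hBsub, h⟩⟩)
    have hL1 : ∑ s', |Phat ω p.1 p.2 s' - P p.1 p.2 s'| ≤ 2 * τ :=
      l1_of_partial SE (fun s' => Phat ω p.1 p.2 s' - P p.1 p.2 s')
        (fun s' hs' => by
          show Phat ω p.1 p.2 s' - P p.1 p.2 s' = 0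
          rw [hPhatOff ω p hp (hin p hp) s' hs', hPoff p hp s' hs']; ring)
        (hdtot ω p hp) τ hBlt
    calc |∑ s', (Phat ω p.1 p.2 s' - P p.1 p.2 s') * V s'|
        ≤ ∑ s', |(Phat ω p.1 p.2 s' - P p.1 p.2 s') * V s'| := Finset.abs_sum_le_sum_abs _ _
      _ ≤ ∑ s', |Phat ω p.1 p.2 s' - P p.1 p.2 s'| * Cv := by
          refine Finset.sum_le_sum fun s' _ => ?_
          rw [abs_mul]
          exact mul_le_mul_of_nonneg_left (hVle s') (abs_nonneg _)
      _ = (∑ s', |Phat ω p.1 p.2 s' - P p.1 p.2 s'|) * Cv := (Finset.sum_mul _ _ _).symm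
      _ ≤ 2 * τ * Cv := mul_le_mul_of_nonneg_right hL1 hCv0.le
      _ = κ := by
          rw [hτ]
          field_simp
  -- Hoeffding bound for each event E p B
  have hEbound : ∀ p ∈ Ω', ∀ B : Finset S,
      ℙ (E p B) ≤ ENNReal.ofReal (Real.exp (-(2 * N * τ ^ 2))) := by
    intro p hp B
    set W : (S × A) × Fin N → Ωm → ℝ := fun q =>
      (fun s : S => (if s ∈ B then (1 : ℝ) else 0) - ∑ s' ∈ B, P q.1.1 q.1.2 s')
        ∘ (fun ω => X q.1 q.2 ω) with hW
    have hWmeas : ∀ q, Measurable (W q) := fun q =>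
      (measurable_of_countable _).comp (hXmeas q.1 q.2)
    have hμq : ∀ q : (S × A) × Fin N,
        0 ≤ ∑ s' ∈ B, P q.1.1 q.1.2 s' ∧ ∑ s' ∈ B, P q.1.1 q.1.2 s' ≤ 1 := by
      intro q
      refine ⟨Finset.sum_nonneg fun s' _ => hP.1 _ _ _, ?_⟩
      rw [← hP.2 q.1.1 q.1.2]
      exact Finset.sum_le_sum_of_subset_of_nonneg (Finset.subset_univ B)
        (fun _ _ _ => hP.1 _ _ _)
    have hWbdd : ∀ q ω, |W q ω| ≤ 1 := by
      intro q ω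
      obtain ⟨h0, h1⟩ := hμq q
      rw [hW]
      simp only [Function.comp_apply]
      rw [abs_le]
      constructor <;> split_ifs <;> linarith
    have hWindep : ProbabilityTheory.iIndepFun W ℙ :=
      hindep.comp _ (fun q => measurable_of_countable _)
    have hWmgf : ∀ t : ℝ, ∀ q ∈ ({p} ×ˢ (Finset.univ : Finset (Fin N))),
        ProbabilityTheory.mgf (W q) ℙ t ≤ Real.exp (t ^ 2 / 8) := by
      intro t q hq
      have hq1 : q.1 = p := Finset.mem_singleton.mp (Finset.mem_product.mp hq).1
      rw [hW]
      simp only []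
      rw [hq1]
      exact mgf_indicator_le (X p q.2) (hXmeas p q.2) (P p.1 p.2)
        (fun s' => hP.1 p.1 p.2 s') (hP.2 p.1 p.2) (fun s' => hlaw p hp q.2 s') B t
    have hsne : ({p} ×ˢ (Finset.univ : Finset (Fin N))).Nonempty :=
      ⟨(p, ⟨0, hN⟩), by simp⟩
    have hNpos : (0 : ℝ) < N := by exact_mod_cast hN
    have htail := hoeffding_tail W _ hsne hWmeas hWbdd hWindep hWmgf ((N : ℝ) * τ)
      (mul_pos hNpos hτ0)
    have hsubE : E p B ⊆ {ω | (N : ℝ) * τ ≤ ∑ q ∈ {p} ×ˢ Finset.univ, W q ω} := by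
      intro ω hω
      simp only [hE, Set.mem_setOf_eq] at hω
      simp only [Set.mem_setOf_eq]
      have hsum : ∑ q ∈ {p} ×ˢ (Finset.univ : Finset (Fin N)), W q ω
          = ∑ i : Fin N, ((if X p i ω ∈ B then (1 : ℝ) else 0) - ∑ s' ∈ B, P p.1 p.2 s') := by
        rw [Finset.sum_product, Finset.sum_singleton]
        exact Finset.sum_congr rfl fun i _ => rfl
      have hcount : ∑ s' ∈ B, Phat ω p.1 p.2 s'
          = (∑ i : Fin N, if X p i ω ∈ B then (1 : ℝ) else 0) / N := by
        rw [Finset.sum_congr rfl (fun s' _ => hemp p hp ω s'), ← Finset.sum_div]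
        congr 1
        have hc : ∀ s' : S, ((Finset.univ.filter fun i : Fin N => X p i ω = s').card : ℝ)
            = ∑ i : Fin N, if X p i ω = s' then (1 : ℝ) else 0 := by
          intro s'
          rw [Finset.card_filter]
          push_cast
          rfl
        rw [Finset.sum_congr rfl fun s' _ => hc s', Finset.sum_comm]
        refine Finset.sum_congr rfl fun i _ => ?_
        rw [Finset.sum_ite_eq B (X p i ω) (fun _ => (1 : ℝ))]
      rw [hsum, Finset.sum_sub_distrib, Finset.sum_const, Finset.card_univ,
        Fintype.card_fin, nsmul_eq_mul]
      rw [Finset.sum_sub_distrib, hcount] at hω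
      have h := mul_le_mul_of_nonneg_left hω hNpos.le
      calc (N : ℝ) * τ ≤ (N : ℝ) * ((∑ i : Fin N, if X p i ω ∈ B then (1 : ℝ) else 0) / N
            - ∑ s' ∈ B, P p.1 p.2 s') := h
        _ = (∑ i : Fin N, if X p i ω ∈ B then (1 : ℝ) else 0)
            - (N : ℝ) * ∑ s' ∈ B, P p.1 p.2 s' := by
            field_simp
      -- done
    calc ℙ (E p B) ≤ ℙ {ω | (N : ℝ) * τ ≤ ∑ q ∈ {p} ×ˢ Finset.univ, W q ω} :=
          measure_mono hsubE
      _ ≤ ENNReal.ofReal (Real.exp (-2 * ((N : ℝ) * τ) ^ 2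
            / (({p} ×ˢ (Finset.univ : Finset (Fin N))).card))) := htail
      _ = ENNReal.ofReal (Real.exp (-(2 * N * τ ^ 2))) := by
          congr 2
          rw [Finset.card_product, Finset.card_singleton, Finset.card_univ,
            Fintype.card_fin, one_mul]
          field_simp
  -- probability of the bad event
  have hGoodcμ : ℙ Goodᶜ ≤ ENNReal.ofReal δ := by
    refine le_trans (measure_mono hGoodc) ?_
    refine le_trans (measure_union_le _ _) ?_
    rw [hB0null, zero_add]
    refine le_trans (measure_biUnion_finset_le Ω' _) ?_
    by_cases hm2 : 2 ≤ SE.card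
    · -- Hoeffding route
      set L : ℝ := Real.log ((Ω'.card : ℝ) / δ) with hLdef
      have hNL : c ^ 2 * SE.card * L / 2 ≤ 2 * N * τ ^ 2 := by
        have hKpos : (0 : ℝ) < Ω'.card := by exact_mod_cast hK1
        have hsampN : 4 * γ ^ 2 * Cv ^ 2 * c ^ 2 * SE.card * L
            / ((1 - γ) ^ 2 * ε ^ 2) ≤ (N : ℝ) := by
          have h := hsamp
          have h2 : (4 * γ ^ 2 * Cv ^ 2 * c ^ 2 * SE.card * L
              / ((1 - γ) ^ 2 * ε ^ 2)) * (Ω'.card : ℝ) ≤ (N : ℝ) * (Ω'.card : ℝ) := by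
            calc (4 * γ ^ 2 * Cv ^ 2 * c ^ 2 * SE.card * L
                / ((1 - γ) ^ 2 * ε ^ 2)) * (Ω'.card : ℝ)
                = 4 * γ ^ 2 * Cv ^ 2 * c ^ 2 * (Ω'.card : ℝ) * (SE.card : ℝ)
                  / ((1 - γ) ^ 2 * ε ^ 2) * L := by ring
              _ ≤ (N : ℝ) * (Ω'.card : ℝ) := h
          exact le_of_mul_le_mul_right h2 hKpos
        have hτval : τ = ε * (1 - γ) / (4 * γ * Cv) := by
          rw [hτ, hκ]
          field_simp
          ring
        have hLnn : 0 ≤ L := by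
          rw [hLdef]
          apply Real.log_nonneg
          rw [le_div_iff₀ hδ0]
          have : (1:ℝ) ≤ (Ω'.card : ℝ) := by exact_mod_cast hK1
          nlinarith
        have hfac : 0 ≤ c ^ 2 * SE.card * L := by
          have : (0:ℝ) ≤ (SE.card : ℝ) := by positivity
          positivity
        calc c ^ 2 * SE.card * L / 2
            = (4 * γ ^ 2 * Cv ^ 2 * c ^ 2 * SE.card * L / ((1 - γ) ^ 2 * ε ^ 2))
              * (2 * (ε * (1 - γ) / (4 * γ * Cv)) ^ 2) := by
              field_simp
              ring
          _ ≤ (N : ℝ) * (2 * (ε * (1 - γ) / (4 * γ * Cv)) ^ 2) := by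
              refine mul_le_mul_of_nonneg_right hsampN ?_
              positivity
          _ = 2 * N * τ ^ 2 := by rw [hτval]; ring
      calc ∑ p ∈ Ω', ℙ (⋃ B ∈ SE.powerset, E p B)
          ≤ ∑ p ∈ Ω', ∑ B ∈ SE.powerset, ℙ (E p B) :=
            Finset.sum_le_sum fun p _ => measure_biUnion_finset_le _ _
        _ ≤ ∑ p ∈ Ω', ∑ _B ∈ SE.powerset, ENNReal.ofReal (Real.exp (-(2 * N * τ ^ 2))) :=
            Finset.sum_le_sum fun p hp => Finset.sum_le_sum fun B _ => hEbound p hp B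
        _ = (Ω'.card : ENNReal) * ((2 ^ SE.card : ℕ) : ENNReal)
              * ENNReal.ofReal (Real.exp (-(2 * N * τ ^ 2))) := by
            rw [Finset.sum_const, Finset.sum_const, Finset.card_powerset]
            rw [nsmul_eq_mul, nsmul_eq_mul]
            ring
        _ = ENNReal.ofReal ((Ω'.card : ℝ) * 2 ^ SE.card * Real.exp (-(2 * N * τ ^ 2))) := by
            rw [show ((Ω'.card : ℝ) * 2 ^ SE.card * Real.exp (-(2 * N * τ ^ 2)))
                = ((Ω'.card * 2 ^ SE.card : ℕ) : ℝ) * Real.exp (-(2 * N * τ ^ 2)) by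
                push_cast; ring,
              ENNReal.ofReal_mul (by positivity), ENNReal.ofReal_natCast]
            push_cast
            ring
        _ ≤ ENNReal.ofReal δ := by
            apply ENNReal.ofReal_le_ofReal
            exact final_numeric Ω'.card SE.card hm2 hmK hδ0 hδ1 rfl hLdef hc hNL
    · -- |Sᴱ| = 1 : the events are almost surely impossible
      push_neg at hm2
      have hcard1 : SE.card = 1 := le_antisymm (by omega) hm1
      obtain ⟨s₀, hs₀⟩ := Finset.card_eq_one.mp hcard1
      have hEsub : ∀ p ∈ Ω', ∀ B ∈ SE.powerset, E p B ⊆ B0 := by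
        intro p hp B hB ω hω
        by_contra hnB0
        have hin : ∀ i, X p i ω ∈ SE := by
          intro i
          by_contra h
          exact hnB0 (Set.mem_iUnion₂.mpr ⟨p, hp, Set.mem_iUnion.mpr ⟨i, h⟩⟩)
        have hBsub := Finset.mem_powerset.mp hB
        have hz : ∑ s' ∈ B, (Phat ω p.1 p.2 s' - P p.1 p.2 s') = 0 := by
          rcases Finset.subset_singleton_iff.mp (hs₀ ▸ hBsub) with h | h
          · rw [h]; simp
          · rw [h, ← hs₀]
            exact hdsum0 ω p hp hin
        simp only [hE, Set.mem_setOf_eq] at hω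
        rw [hz] at hω
        linarith
      calc ∑ p ∈ Ω', ℙ (⋃ B ∈ SE.powerset, E p B)
          ≤ ∑ p ∈ Ω', ∑ B ∈ SE.powerset, ℙ (E p B) :=
            Finset.sum_le_sum fun p _ => measure_biUnion_finset_le _ _
        _ ≤ ∑ p ∈ Ω', ∑ B ∈ SE.powerset, (0 : ENNReal) := by
            refine Finset.sum_le_sum fun p hp => Finset.sum_le_sum fun B hB => ?_
            rw [← hB0null]
            exact measure_mono (hEsub p hp B hB)
        _ = 0 := by simp
        _ ≤ ENNReal.ofReal δ := zero_le
  -- conclusion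
  have htargetc : {ω | discSum γ P piE η (fun s a => Real.log (softmax (Q ω (θstar ω)) s a)) -
      discSum γ P piE η (fun s a => Real.log (softmax (Q ω (θhat ω)) s a)) ≤ ε}ᶜ ⊆ Goodᶜ :=
    Set.compl_subset_compl.mpr hsubGood
  have hone : (1 : ENNReal) ≤ ℙ {ω |
      discSum γ P piE η (fun s a => Real.log (softmax (Q ω (θstar ω)) s a)) -
        discSum γ P piE η (fun s a => Real.log (softmax (Q ω (θhat ω)) s a)) ≤ ε}
      + ENNReal.ofReal δ := by
    calc (1 : ENNReal) = ℙ (Set.univ : Set Ωm) := measure_univ.symm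
      _ ≤ ℙ ({ω | discSum γ P piE η (fun s a => Real.log (softmax (Q ω (θstar ω)) s a)) -
            discSum γ P piE η (fun s a => Real.log (softmax (Q ω (θhat ω)) s a)) ≤ ε}
          ∪ {ω | discSum γ P piE η (fun s a => Real.log (softmax (Q ω (θstar ω)) s a)) -
            discSum γ P piE η (fun s a => Real.log (softmax (Q ω (θhat ω)) s a)) ≤ ε}ᶜ) := by
          rw [Set.union_compl_self]
      _ ≤ _ + ℙ ({ω | discSum γ P piE η (fun s a => Real.log (softmax (Q ω (θstar ω)) s a)) -
            discSum γ P piE η (fun s a => Real.log (softmax (Q ω (θhat ω)) s a)) ≤ ε}ᶜ) :=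
          measure_union_le _ _
      _ ≤ _ + ENNReal.ofReal δ :=
          add_le_add_right (le_trans (measure_mono htargetc) hGoodcμ) _
  rw [ENNReal.ofReal_sub 1 hδ0.le, ENNReal.ofReal_one]
  exact tsub_le_iff_right.mpr hone
end
end

section
/- For every reward parameter θ and every state-action pair (s₀,a₀), the gradient of the optimal soft Q-function with respect to θ equals the expected discounted sum of reward gradients along trajectories generated by the optimal policy in the estimated world model: ∇_θ Q_θ(s₀,a₀) = E_{τ∼(π_θ,P̂)}[ Σ_{t≥0} γ^t ∇_θ r(s_t,a_t;θ) | s₀, a₀ ]. -/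
open Real BigOperators Finset

noncomputable section

/-- Distribution of the state-action pair at time `t`, starting from the fixed pair
`(s₀, a₀)` at time `0`, then following policy `pol` and kernel `P`. -/
def saDist {S A : Type} [Fintype S] [Fintype A] [DecidableEq S] [DecidableEq A]
    (P : S → A → S → ℝ) (pol : S → A → ℝ) (s0 : S) (a0 : A) : ℕ → S → A → ℝ
  | 0 => fun s a => if s = s0 ∧ a = a0 then 1 else 0
  | (t + 1) => fun s' a' => pol s' a' * ∑ s, ∑ a, saDist P pol s0 a0 t s a * P s a s'

/- Auxiliary lemmas -/
lemma logSumExp_le {A : Type} [Fintype A] [Nonempty A] (q q' : A → ℝ) (c : ℝ)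
    (h : ∀ a, q a ≤ q' a + c) :
    Real.log (∑ a, Real.exp (q a)) ≤ Real.log (∑ a, Real.exp (q' a)) + c := by
  have hpos : 0 < ∑ a, Real.exp (q' a) :=
    Finset.sum_pos (fun a _ => Real.exp_pos _) Finset.univ_nonempty
  have hpos' : 0 < ∑ a, Real.exp (q a) :=
    Finset.sum_pos (fun a _ => Real.exp_pos _) Finset.univ_nonempty
  have h1 : ∑ a, Real.exp (q a) ≤ (∑ a, Real.exp (q' a)) * Real.exp c := by
    rw [Finset.sum_mul]
    exact Finset.sum_le_sum fun a _ => by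
      rw [← Real.exp_add]; exact Real.exp_le_exp.2 (h a)
  calc Real.log (∑ a, Real.exp (q a))
      ≤ Real.log ((∑ a, Real.exp (q' a)) * Real.exp c) := Real.log_le_log hpos' h1
    _ = _ := by rw [Real.log_mul (ne_of_gt hpos) (Real.exp_ne_zero c), Real.log_exp]

lemma abs_logSumExp_sub_le {A : Type} [Fintype A] [Nonempty A] (q q' : A → ℝ) (c : ℝ)
    (h : ∀ a, |q a - q' a| ≤ c) :
    |Real.log (∑ a, Real.exp (q a)) - Real.log (∑ a, Real.exp (q' a))| ≤ c := by
  rw [abs_sub_le_iff]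
  constructor
  · have := logSumExp_le q q' c (fun a => by have := (abs_le.1 (h a)).2; linarith)
    linarith
  · have := logSumExp_le q' q c (fun a => by have := (abs_le.1 (h a)).1; linarith)
    linarith

/-- Derivative of the log-sum-exp along one state's row, as a function on `(S × A) → ℝ`. -/
lemma hasFDerivAt_lseY {S A : Type} [Fintype S] [Fintype A] [Nonempty A]
    (s : S) (q : (S × A) → ℝ) :
    HasFDerivAt (fun q' : (S × A) → ℝ => Real.log (∑ a, Real.exp (q' (s, a))))
      ((∑ a, Real.exp (q (s, a)))⁻¹ •
        ∑ a, Real.exp (q (s, a)) • ContinuousLinearMap.proj (R := ℝ) (φ := fun _ : S × A => ℝ) (s, a)) q := by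
  have hpos : 0 < ∑ a, Real.exp (q (s, a)) :=
    Finset.sum_pos (fun a _ => Real.exp_pos _) Finset.univ_nonempty
  have h1 : HasFDerivAt (fun q' : (S × A) → ℝ => ∑ a, Real.exp (q' (s, a)))
      (∑ a, Real.exp (q (s, a)) • ContinuousLinearMap.proj (R := ℝ) (φ := fun _ : S × A => ℝ) (s, a)) q := by
    apply HasFDerivAt.fun_sum
    intro a _
    exact (ContinuousLinearMap.proj (R := ℝ) (φ := fun _ : S × A => ℝ) (s, a)).hasFDerivAt.exp
  exact h1.log (ne_of_gt hpos)

/-- **gradient of the optimal soft Q-function.**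
For every reward parameter `θ` and state-action pair `(s₀,a₀)`,
`∇_θ Q_θ(s₀,a₀) = E_{τ∼(π_θ,P̂)}[ ∑_t γ^t ∇_θ r(s_t,a_t;θ) | s₀, a₀ ]`, where the
initial action is `a₀` and thereafter actions follow the optimal policy
`π_θ = softmax (Q θ)` and states evolve under the estimated world model `P̂`. -/
theorem stmt7 {S A : Type} [Fintype S] [Fintype A] [Nonempty S] [Nonempty A]
    [DecidableEq S] [DecidableEq A] (d : ℕ)
    (γ : ℝ) (hγ : γ ∈ Set.Ioo (0 : ℝ) 1)
    (Phat : S → A → S → ℝ) (hPhat : IsKernel Phat)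
    (r : S → A → EuclideanSpace ℝ (Fin d) → ℝ) (U : S → A → ℝ)
    (hrd : ∀ s a, Differentiable ℝ (r s a))
    (Q : EuclideanSpace ℝ (Fin d) → S → A → ℝ)
    (hQ : ∀ θ s a, Q θ s a = r s a θ + U s a + γ * ∑ s', Phat s a s' * lse (Q θ) s')
    (θ : EuclideanSpace ℝ (Fin d)) (s0 : S) (a0 : A) :
    gradient (fun θ' => Q θ' s0 a0) θ =
      ∑' t : ℕ, γ ^ t •
        ∑ s, ∑ a, saDist Phat (softmax (Q θ)) s0 a0 t s a • gradient (r s a) θ := by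
  have hK : (∀ s a s', 0 ≤ Phat s a s') ∧ ∀ s a, ∑ s', Phat s a s' = 1 := hPhat
  set pol : S → A → ℝ := softmax (Q θ) with hpol
  -- policy facts
  have hpol0 : ∀ s a, 0 ≤ pol s a := fun s a =>
    div_nonneg (Real.exp_pos _).le (Finset.sum_nonneg fun a' _ => (Real.exp_pos _).le)
  have hexppos : ∀ s : S, 0 < ∑ a', Real.exp (Q θ s a') := fun s =>
    Finset.sum_pos (fun a _ => Real.exp_pos _) Finset.univ_nonempty
  have hpol1 : ∀ s, ∑ a, pol s a = 1 := by
    intro s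
    rw [hpol]
    simp only [softmax, ← Finset.sum_div]
    exact div_self (ne_of_gt (hexppos s))
  -- the matrix and the operator B
  set M : Matrix (S × A) (S × A) ℝ :=
    fun p p' => γ * Phat p.1 p.2 p'.1 * pol p'.1 p'.2 with hM
  set B : ((S × A) → ℝ) →L[ℝ] ((S × A) → ℝ) :=
    LinearMap.toContinuousLinearMap M.mulVecLin with hB
  have hBapp : ∀ (g : (S × A) → ℝ) (p : S × A),
      B g p = γ * ∑ s', Phat p.1 p.2 s' * ∑ a', pol s' a' * g (s', a') := by
    intro g p
    show M.mulVec g p = _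
    rw [Matrix.mulVec, dotProduct]
    rw [Fintype.sum_prod_type]
    rw [Finset.mul_sum]
    refine Finset.sum_congr rfl fun s' _ => ?_
    rw [Finset.mul_sum, Finset.mul_sum]
    exact Finset.sum_congr rfl fun a' _ => by rw [hM]; ring
  have hBnorm : ‖B‖ ≤ γ := by
    refine ContinuousLinearMap.opNorm_le_bound _ hγ.1.le fun g => ?_
    rw [pi_norm_le_iff_of_nonneg (mul_nonneg hγ.1.le (norm_nonneg g))]
    intro p
    rw [hBapp g p, Real.norm_eq_abs, abs_mul, abs_of_nonneg hγ.1.le]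
    have : |∑ s', Phat p.1 p.2 s' * ∑ a', pol s' a' * g (s', a')| ≤ ‖g‖ := by
      refine (Finset.abs_sum_le_sum_abs _ _).trans ?_
      calc ∑ s', |Phat p.1 p.2 s' * ∑ a', pol s' a' * g (s', a')|
          ≤ ∑ s', Phat p.1 p.2 s' * ‖g‖ := by
            refine Finset.sum_le_sum fun s' _ => ?_
            rw [abs_mul, abs_of_nonneg (hK.1 _ _ _)]
            refine mul_le_mul_of_nonneg_left ?_ (hK.1 _ _ _)
            refine (Finset.abs_sum_le_sum_abs _ _).trans ?_
            calc ∑ a', |pol s' a' * g (s', a')| ≤ ∑ a', pol s' a' * ‖g‖ := by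
                  refine Finset.sum_le_sum fun a' _ => ?_
                  rw [abs_mul, abs_of_nonneg (hpol0 _ _)]
                  exact mul_le_mul_of_nonneg_left (norm_le_pi_norm g (s', a')) (hpol0 _ _)
              _ = ‖g‖ := by rw [← Finset.sum_mul, hpol1, one_mul]
        _ = ‖g‖ := by rw [← Finset.sum_mul, hK.2, one_mul]
    exact mul_le_mul_of_nonneg_left this hγ.1.le

  -- derivative of reward vector
  set DR : EuclideanSpace ℝ (Fin d) →L[ℝ] ((S × A) → ℝ) :=
    LinearMap.toContinuousLinearMap
      (LinearMap.pi fun p : S × A => (fderiv ℝ (r p.1 p.2) θ : EuclideanSpace ℝ (Fin d) →ₗ[ℝ] ℝ)) with hDR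
  have hDRapp : ∀ (h : EuclideanSpace ℝ (Fin d)) (p : S × A), DR h p = fderiv ℝ (r p.1 p.2) θ h := fun h p => by rw [hDR]; rfl
  set Qv : EuclideanSpace ℝ (Fin d) → ((S × A) → ℝ) := fun θ' p => Q θ' p.1 p.2 with hQv
  set Rdiff : EuclideanSpace ℝ (Fin d) → ((S × A) → ℝ) := fun θ' p => r p.1 p.2 θ' - r p.1 p.2 θ with hRdiff
  have h1γ : (0:ℝ) < 1 - γ := by linarith [hγ.2]
  have hlse_abs : ∀ (θ' : EuclideanSpace ℝ (Fin d)) (s' : S),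
      |lse (Q θ') s' - lse (Q θ) s'| ≤ ‖Qv θ' - Qv θ‖ := by
    intro θ' s'
    refine abs_logSumExp_sub_le (fun a => Q θ' s' a) (fun a => Q θ s' a) _ fun a => ?_
    have := norm_le_pi_norm (Qv θ' - Qv θ) (s', a)
    simpa [Real.norm_eq_abs] using this
  have hΔle : ∀ θ' : EuclideanSpace ℝ (Fin d), ‖Qv θ' - Qv θ‖ ≤ (1 - γ)⁻¹ * ‖Rdiff θ'‖ := by
    intro θ'
    have step1 : ‖Qv θ' - Qv θ‖ ≤ ‖Rdiff θ'‖ + γ * ‖Qv θ' - Qv θ‖ := by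
      rw [pi_norm_le_iff_of_nonneg (add_nonneg (norm_nonneg _) (mul_nonneg hγ.1.le (norm_nonneg _)))]
      intro p
      have hdecomp : Qv θ' p - Qv θ p =
          Rdiff θ' p + γ * ∑ s', Phat p.1 p.2 s' * (lse (Q θ') s' - lse (Q θ) s') := by
        have hsplit : ∑ s', Phat p.1 p.2 s' * (lse (Q θ') s' - lse (Q θ) s') =
            (∑ s', Phat p.1 p.2 s' * lse (Q θ') s') - ∑ s', Phat p.1 p.2 s' * lse (Q θ) s' := by
          rw [← Finset.sum_sub_distrib]
          exact Finset.sum_congr rfl fun s' _ => mul_sub _ _ _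
        rw [hQv, hRdiff]
        simp only
        rw [hQ θ' p.1 p.2, hQ θ p.1 p.2, hsplit]
        ring
      have : ‖Qv θ' p - Qv θ p‖ = |(Qv θ' - Qv θ) p| := by simp [Real.norm_eq_abs]
      rw [Pi.sub_apply] at this ⊢
      rw [Real.norm_eq_abs, hdecomp]
      refine (abs_add_le _ _).trans (add_le_add (norm_le_pi_norm (Rdiff θ') p) ?_)
      rw [abs_mul, abs_of_nonneg hγ.1.le]
      refine mul_le_mul_of_nonneg_left ?_ hγ.1.le
      refine (Finset.abs_sum_le_sum_abs _ _).trans ?_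
      calc ∑ s', |Phat p.1 p.2 s' * (lse (Q θ') s' - lse (Q θ) s')|
          ≤ ∑ s', Phat p.1 p.2 s' * ‖Qv θ' - Qv θ‖ := by
            refine Finset.sum_le_sum fun s' _ => ?_
            rw [abs_mul, abs_of_nonneg (hK.1 _ _ _)]
            exact mul_le_mul_of_nonneg_left (hlse_abs θ' s') (hK.1 _ _ _)
        _ = ‖Qv θ' - Qv θ‖ := by rw [← Finset.sum_mul, hK.2, one_mul]
    have h2 : (1 - γ) * ‖Qv θ' - Qv θ‖ ≤ ‖Rdiff θ'‖ := by linarith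
    calc ‖Qv θ' - Qv θ‖ = (1 - γ)⁻¹ * ((1 - γ) * ‖Qv θ' - Qv θ‖) := by
          field_simp
      _ ≤ (1 - γ)⁻¹ * ‖Rdiff θ'‖ := mul_le_mul_of_nonneg_left h2 (inv_nonneg.2 h1γ.le)
  have hRdiffO : Rdiff =O[nhds θ] fun θ' => θ' - θ := by
    rw [Asymptotics.isBigO_pi]
    intro p
    rw [hRdiff]
    exact (hrd p.1 p.2 θ).hasFDerivAt.isBigO_sub
  have hΔO : (fun θ' => Qv θ' - Qv θ) =O[nhds θ] fun θ' => θ' - θ :=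
    (Asymptotics.isBigO_of_le' (c := (1 - γ)⁻¹) _ fun θ' => by
      simpa [Real.norm_eq_abs, abs_of_nonneg (inv_nonneg.2 h1γ.le)] using hΔle θ').trans hRdiffO
  have hQvTendsto : Filter.Tendsto Qv (nhds θ) (nhds (Qv θ)) := by
    have h0 : Filter.Tendsto (fun θ' => Qv θ' - Qv θ) (nhds θ) (nhds 0) :=
      hΔO.trans_tendsto (tendsto_sub_nhds_zero_iff.2 Filter.tendsto_id)
    have := h0.add_const (Qv θ)
    simpa using this

  -- extract the Bellman decomposition of the increment
  have hdecomp : ∀ (θ' : EuclideanSpace ℝ (Fin d)) (p : S × A),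
      (Qv θ' - Qv θ) p =
        Rdiff θ' p + γ * ∑ s', Phat p.1 p.2 s' * (lse (Q θ') s' - lse (Q θ) s') := by
    intro θ' p
    have hsplit : ∑ s', Phat p.1 p.2 s' * (lse (Q θ') s' - lse (Q θ) s') =
        (∑ s', Phat p.1 p.2 s' * lse (Q θ') s') - ∑ s', Phat p.1 p.2 s' * lse (Q θ) s' := by
      rw [← Finset.sum_sub_distrib]
      exact Finset.sum_congr rfl fun s' _ => mul_sub _ _ _
    rw [Pi.sub_apply, hQv, hRdiff]
    simp only
    rw [hQ θ' p.1 p.2, hQ θ p.1 p.2, hsplit]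
    ring
  -- pointwise identity for the little-o term
  have hBD : ∀ (θ' : EuclideanSpace ℝ (Fin d)) (p : S × A),
      (Qv θ' - Qv θ - B (Qv θ' - Qv θ) - DR (θ' - θ)) p =
        (Rdiff θ' p - fderiv ℝ (r p.1 p.2) θ (θ' - θ))
        + ∑ s', (γ * Phat p.1 p.2 s') *
            (lse (Q θ') s' - lse (Q θ) s' - ∑ a', pol s' a' * (Qv θ' - Qv θ) (s', a')) := by
    intro θ' p
    have hd := hdecomp θ' p
    rw [Pi.sub_apply] at hd
    have e1 : ∑ s', (γ * Phat p.1 p.2 s') *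
          (lse (Q θ') s' - lse (Q θ) s' - ∑ a', pol s' a' * (Qv θ' (s', a') - Qv θ (s', a')))
        = γ * (∑ s', Phat p.1 p.2 s' * (lse (Q θ') s' - lse (Q θ) s'))
          - γ * (∑ s', Phat p.1 p.2 s' * ∑ a', pol s' a' * (Qv θ' (s', a') - Qv θ (s', a'))) := by
      rw [Finset.mul_sum, Finset.mul_sum, ← Finset.sum_sub_distrib]
      exact Finset.sum_congr rfl fun s' _ => by ring
    simp only [Pi.sub_apply]
    rw [hBapp, hDRapp]
    simp only [Pi.sub_apply]
    rw [hd, e1]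
    ring
  -- little-o estimate
  have hlittle : (fun θ' => Qv θ' - Qv θ - B (Qv θ' - Qv θ) - DR (θ' - θ))
      =o[nhds θ] fun θ' => θ' - θ := by
    rw [Asymptotics.isLittleO_pi]
    intro p
    have heq : (fun θ' => (Qv θ' - Qv θ - B (Qv θ' - Qv θ) - DR (θ' - θ)) p)
        = fun θ' => (Rdiff θ' p - fderiv ℝ (r p.1 p.2) θ (θ' - θ))
          + ∑ s', (γ * Phat p.1 p.2 s') *
              (lse (Q θ') s' - lse (Q θ) s' - ∑ a', pol s' a' * (Qv θ' - Qv θ) (s', a')) :=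
      funext fun θ' => hBD θ' p
    rw [heq]
    apply Asymptotics.IsLittleO.add
    · have h2 := (hrd p.1 p.2 θ).hasFDerivAt.isLittleO
      have : (fun θ' => Rdiff θ' p - fderiv ℝ (r p.1 p.2) θ (θ' - θ))
          = fun θ' => r p.1 p.2 θ' - r p.1 p.2 θ - fderiv ℝ (r p.1 p.2) θ (θ' - θ) := by
        funext θ'; rw [hRdiff]
      rw [this]
      exact h2
    · apply Asymptotics.IsLittleO.fun_sum
      intro s' _
      apply Asymptotics.IsLittleO.const_mul_left
      have hD : ∀ g : (S × A) → ℝ,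
          ((∑ a, Real.exp (Qv θ (s', a)))⁻¹ •
            ∑ a, Real.exp (Qv θ (s', a)) •
              ContinuousLinearMap.proj (R := ℝ) (φ := fun _ : S × A => ℝ) (s', a)) g
          = ∑ a', pol s' a' * g (s', a') := by
        intro g
        simp only [ContinuousLinearMap.smul_apply, ContinuousLinearMap.sum_apply,
          ContinuousLinearMap.proj_apply, smul_eq_mul, Finset.mul_sum]
        refine Finset.sum_congr rfl fun a' _ => ?_
        rw [hpol]
        simp only [softmax]
        have : Qv θ (s', a') = Q θ s' a' := rfl
        rw [div_eq_inv_mul]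
        ring
      have hlseD := hasFDerivAt_lseY (A := A) s' (Qv θ)
      have h3 := hlseD.isLittleO.comp_tendsto hQvTendsto
      have h4 := h3.trans_isBigO hΔO
      have hfun : ((fun q : (S × A) → ℝ =>
              Real.log (∑ a, Real.exp (q (s', a))) - Real.log (∑ a, Real.exp (Qv θ (s', a)))
              - ((∑ a, Real.exp (Qv θ (s', a)))⁻¹ •
                  ∑ a, Real.exp (Qv θ (s', a)) •
                    ContinuousLinearMap.proj (R := ℝ) (φ := fun _ : S × A => ℝ) (s', a))
                  (q - Qv θ)) ∘ Qv)
          = fun θ' => lse (Q θ') s' - lse (Q θ) s'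
              - ∑ a', pol s' a' * (Qv θ' - Qv θ) (s', a') := by
        funext θ'
        simp only [Function.comp_apply]
        rw [hD]
        rfl
      rw [hfun] at h4
      exact h4
  -- the geometric-series inverse
  have hBlt : ‖B‖ < 1 := lt_of_le_of_lt hBnorm hγ.2
  have hBsum : Summable (fun n : ℕ => B ^ n) := summable_geometric_of_norm_lt_one hBlt
  set Lsum : ((S × A) → ℝ) →L[ℝ] ((S × A) → ℝ) := ∑' n : ℕ, B ^ n with hLsum
  have happly : ∀ u : (S × A) → ℝ, Lsum u = ∑' n : ℕ, (B ^ n) u := by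
    intro u
    rw [hLsum]
    exact (ContinuousLinearMap.apply ℝ ((S × A) → ℝ) u).map_tsum hBsum
  have hsummapp : ∀ u : (S × A) → ℝ, Summable (fun n : ℕ => (B ^ n) u) := fun u =>
    (hBsum.hasSum.mapL (ContinuousLinearMap.apply ℝ ((S × A) → ℝ) u)).summable
  have hgeom : ∀ u : (S × A) → ℝ, Lsum u - B (Lsum u) = u := by
    intro u
    rw [happly]
    have h1 : B (∑' n : ℕ, (B ^ n) u) = ∑' n : ℕ, (B ^ (n + 1)) u := by
      rw [B.map_tsum (hsummapp u)]
      refine tsum_congr fun n => ?_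
      rw [pow_succ']
      rfl
    rw [h1, (hsummapp u).tsum_eq_zero_add]
    simp only [pow_zero, ContinuousLinearMap.one_apply]
    abel
  -- the derivative of Qv
  have hwO : (fun θ' => Qv θ' - Qv θ - Lsum (DR (θ' - θ))) =o[nhds θ] fun θ' => θ' - θ := by
    have hbound : ∀ θ' : EuclideanSpace ℝ (Fin d),
        ‖Qv θ' - Qv θ - Lsum (DR (θ' - θ))‖ ≤
          (1 - γ)⁻¹ * ‖Qv θ' - Qv θ - B (Qv θ' - Qv θ) - DR (θ' - θ)‖ := by
      intro θ'
      set u := DR (θ' - θ) with hu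
      set Lu := Lsum u with hLu
      set w := Qv θ' - Qv θ - Lu with hwdef
      set e := Qv θ' - Qv θ - B (Qv θ' - Qv θ) - u with hedef
      have hg := hgeom u
      rw [← hLu] at hg
      have hBLu : B Lu = Lu - u := by rw [← hg]; abel
      have hw : w = B w + e := by
        rw [hwdef, hedef, map_sub B (Qv θ' - Qv θ) Lu, hBLu]
        abel
      have h3 : ‖w‖ ≤ γ * ‖w‖ + ‖e‖ := by
        calc ‖w‖ = ‖B w + e‖ := by rw [← hw]
          _ ≤ ‖B w‖ + ‖e‖ := norm_add_le _ _
          _ ≤ ‖B‖ * ‖w‖ + ‖e‖ := add_le_add_left (B.le_opNorm w) _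
          _ ≤ γ * ‖w‖ + ‖e‖ :=
              add_le_add_left (mul_le_mul_of_nonneg_right hBnorm (norm_nonneg w)) _
      have h2 : (1 - γ) * ‖w‖ ≤ ‖e‖ := by linarith
      calc ‖w‖ = (1 - γ)⁻¹ * ((1 - γ) * ‖w‖) := by field_simp
        _ ≤ (1 - γ)⁻¹ * ‖e‖ := mul_le_mul_of_nonneg_left h2 (inv_nonneg.2 h1γ.le)
    exact (Asymptotics.isBigO_of_le' (c := (1 - γ)⁻¹) _ hbound).trans_isLittleO hlittle
  have hQvDeriv : HasFDerivAt Qv (Lsum.comp DR) θ :=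
    HasFDerivAt.of_isLittleO (by simpa only [ContinuousLinearMap.comp_apply] using hwO)
  have hfQ : HasFDerivAt (fun θ' => Q θ' s0 a0)
      ((ContinuousLinearMap.proj (R := ℝ) (φ := fun _ : S × A => ℝ) (s0, a0)).comp
        (Lsum.comp DR)) θ :=
    (ContinuousLinearMap.proj (R := ℝ) (φ := fun _ : S × A => ℝ) (s0, a0)).hasFDerivAt.comp θ
      hQvDeriv

  -- saDist facts
  have hsa0 : ∀ t s a, 0 ≤ saDist Phat pol s0 a0 t s a := by
    intro t
    induction t with
    | zero => intro s a; simp only [saDist]; positivity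
    | succ t ih =>
      intro s' a'
      simp only [saDist]
      refine mul_nonneg (hpol0 _ _) (Finset.sum_nonneg fun s _ => Finset.sum_nonneg fun a _ => ?_)
      exact mul_nonneg (ih s a) (hK.1 _ _ _)
  have hsa1 : ∀ t, ∑ s, ∑ a, saDist Phat pol s0 a0 t s a = 1 := by
    intro t
    induction t with
    | zero => simp [saDist, ite_and, Finset.sum_ite_eq']
    | succ t ih =>
      simp only [saDist]
      calc ∑ s', ∑ a', pol s' a' * ∑ s, ∑ a, saDist Phat pol s0 a0 t s a * Phat s a s'
          = ∑ s', ∑ s, ∑ a, saDist Phat pol s0 a0 t s a * Phat s a s' := by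
            refine Finset.sum_congr rfl fun s' _ => ?_
            rw [← Finset.sum_mul, hpol1, one_mul]
        _ = ∑ s, ∑ a, saDist Phat pol s0 a0 t s a * ∑ s', Phat s a s' := by
            rw [Finset.sum_comm]
            refine Finset.sum_congr rfl fun s _ => ?_
            rw [Finset.sum_comm]
            refine Finset.sum_congr rfl fun a _ => ?_
            rw [Finset.mul_sum]
        _ = 1 := by
            rw [← ih]
            refine Finset.sum_congr rfl fun s _ => Finset.sum_congr rfl fun a _ => ?_
            rw [hK.2, mul_one]
  -- pair-sum form of B
  have hBapp2 : ∀ (g : (S × A) → ℝ) (p : S × A), B g p = ∑ p' : S × A, M p p' * g p' := by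
    intro g p
    show M.mulVec g p = _
    rw [Matrix.mulVec, dotProduct]
  -- key combinatorial identity
  have hBpow : ∀ (t : ℕ) (g : (S × A) → ℝ),
      (B ^ t) g (s0, a0) = γ ^ t * ∑ s, ∑ a, saDist Phat pol s0 a0 t s a * g (s, a) := by
    intro t
    induction t with
    | zero =>
      intro g
      simp only [pow_zero, ContinuousLinearMap.one_apply, one_mul, saDist]
      simp [ite_and, ite_mul, Finset.sum_ite_eq']
    | succ t ih =>
      intro g
      have h1 : (B ^ (t + 1)) g = (B ^ t) (B g) := by rw [pow_succ]; rfl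
      have core : ∑ s, ∑ a, saDist Phat pol s0 a0 t s a * (B g) (s, a)
          = γ * ∑ s', ∑ a', saDist Phat pol s0 a0 (t + 1) s' a' * g (s', a') := by
        calc ∑ s, ∑ a, saDist Phat pol s0 a0 t s a * (B g) (s, a)
            = ∑ p : S × A, saDist Phat pol s0 a0 t p.1 p.2 * (B g) p :=
              (Fintype.sum_prod_type
                (f := fun p : S × A => saDist Phat pol s0 a0 t p.1 p.2 * (B g) p)).symm
          _ = ∑ p : S × A, ∑ p' : S × A, saDist Phat pol s0 a0 t p.1 p.2 * (M p p' * g p') := by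
              refine Finset.sum_congr rfl fun p _ => ?_
              rw [hBapp2 g p, Finset.mul_sum]
          _ = ∑ p' : S × A, ∑ p : S × A, saDist Phat pol s0 a0 t p.1 p.2 * (M p p' * g p') :=
              Finset.sum_comm
          _ = ∑ p' : S × A,
                (γ * (pol p'.1 p'.2 * ∑ s, ∑ a, saDist Phat pol s0 a0 t s a * Phat s a p'.1))
                  * g p' := by
              refine Finset.sum_congr rfl fun p' _ => ?_
              have e2 : ∀ p : S × A, saDist Phat pol s0 a0 t p.1 p.2 * (M p p' * g p')
                  = (saDist Phat pol s0 a0 t p.1 p.2 * M p p') * g p' := fun p => by ring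
              rw [Finset.sum_congr rfl fun p _ => e2 p, ← Finset.sum_mul]
              congr 1
              calc ∑ p : S × A, saDist Phat pol s0 a0 t p.1 p.2 * M p p'
                  = ∑ s, ∑ a, saDist Phat pol s0 a0 t s a *
                      (γ * Phat s a p'.1 * pol p'.1 p'.2) :=
                    Fintype.sum_prod_type
                      (f := fun p : S × A => saDist Phat pol s0 a0 t p.1 p.2 * M p p')
                _ = γ * (pol p'.1 p'.2 * ∑ s, ∑ a, saDist Phat pol s0 a0 t s a * Phat s a p'.1) := by
                    simp only [Finset.mul_sum]
                    refine Finset.sum_congr rfl fun s _ => Finset.sum_congr rfl fun a _ => ?_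
                    ring
          _ = γ * ∑ s', ∑ a', saDist Phat pol s0 a0 (t + 1) s' a' * g (s', a') := by
              rw [Fintype.sum_prod_type (f := fun p' : S × A =>
                (γ * (pol p'.1 p'.2 * ∑ s, ∑ a, saDist Phat pol s0 a0 t s a * Phat s a p'.1))
                  * g p')]
              simp only [saDist, Finset.mul_sum, Finset.sum_mul]
              refine Finset.sum_congr rfl fun s' _ => Finset.sum_congr rfl fun a' _ =>
                Finset.sum_congr rfl fun x _ => Finset.sum_congr rfl fun y _ => by ring
      rw [h1, ih (B g), core, pow_succ]
      ring

  -- the summands of the expected-gradient series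
  set Gt : ℕ → EuclideanSpace ℝ (Fin d) := fun t => γ ^ t •
    ∑ s, ∑ a, saDist Phat pol s0 a0 t s a • gradient (r s a) θ with hGt
  set C : ℝ := ∑ s, ∑ a, ‖gradient (r s a) θ‖ with hC
  have hgradle : ∀ s a, ‖gradient (r s a) θ‖ ≤ C := by
    intro s a
    rw [hC]
    calc ‖gradient (r s a) θ‖ ≤ ∑ a', ‖gradient (r s a') θ‖ :=
          Finset.single_le_sum (f := fun a' => ‖gradient (r s a') θ‖)
            (fun a' _ => norm_nonneg _) (Finset.mem_univ a)
      _ ≤ ∑ s', ∑ a', ‖gradient (r s' a') θ‖ :=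
          Finset.single_le_sum (f := fun s' => ∑ a', ‖gradient (r s' a') θ‖)
            (fun s' _ => Finset.sum_nonneg fun a' _ => norm_nonneg _) (Finset.mem_univ s)
  have hGtnorm : ∀ t, ‖Gt t‖ ≤ γ ^ t * C := by
    intro t
    rw [hGt]
    simp only
    rw [norm_smul, Real.norm_eq_abs, abs_pow, abs_of_nonneg hγ.1.le]
    refine mul_le_mul_of_nonneg_left ?_ (pow_nonneg hγ.1.le t)
    calc ‖∑ s, ∑ a, saDist Phat pol s0 a0 t s a • gradient (r s a) θ‖
        ≤ ∑ s, ‖∑ a, saDist Phat pol s0 a0 t s a • gradient (r s a) θ‖ := norm_sum_le _ _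
      _ ≤ ∑ s, ∑ a, ‖saDist Phat pol s0 a0 t s a • gradient (r s a) θ‖ :=
          Finset.sum_le_sum fun s _ => norm_sum_le _ _
      _ ≤ ∑ s, ∑ a, saDist Phat pol s0 a0 t s a * C := by
          refine Finset.sum_le_sum fun s _ => Finset.sum_le_sum fun a _ => ?_
          rw [norm_smul, Real.norm_eq_abs, abs_of_nonneg (hsa0 t s a)]
          exact mul_le_mul_of_nonneg_left (hgradle s a) (hsa0 t s a)
      _ = (∑ s, ∑ a, saDist Phat pol s0 a0 t s a) * C := by
          rw [Finset.sum_mul]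
          refine Finset.sum_congr rfl fun s _ => ?_
          rw [Finset.sum_mul]
      _ = C := by rw [hsa1 t, one_mul]
  have hGtsummable : Summable Gt :=
    Summable.of_norm_bounded ((summable_geometric_of_lt_one hγ.1.le hγ.2).mul_right C) hGtnorm
  -- inner-product identification of each summand
  have hgradr : ∀ (s : S) (a : A) (h : EuclideanSpace ℝ (Fin d)),
      fderiv ℝ (r s a) θ h = (inner ℝ (gradient (r s a) θ) h : ℝ) := by
    intro s a h
    rw [((hrd s a θ).hasGradientAt.hasFDerivAt).fderiv]
    exact InnerProductSpace.toDual_apply_apply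
  have hGtinner : ∀ (t : ℕ) (h : EuclideanSpace ℝ (Fin d)),
      (inner ℝ (Gt t) h : ℝ) = ((B ^ t) (DR h)) (s0, a0) := by
    intro t h
    rw [hBpow t (DR h), hGt]
    simp only
    rw [real_inner_smul_left]
    congr 1
    rw [sum_inner]
    refine Finset.sum_congr rfl fun s _ => ?_
    rw [sum_inner]
    refine Finset.sum_congr rfl fun a _ => ?_
    rw [real_inner_smul_left, hDRapp h (s, a), hgradr s a h]
  -- evaluation of the operator series at a vector, then at the coordinate
  have hEval : ∀ h : EuclideanSpace ℝ (Fin d),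
      Lsum (DR h) (s0, a0) = ∑' t : ℕ, ((B ^ t) (DR h)) (s0, a0) := by
    intro h
    have := (ContinuousLinearMap.proj (R := ℝ) (φ := fun _ : S × A => ℝ)
      (s0, a0)).map_tsum (hsummapp (DR h))
    rw [happly (DR h)]
    exact this
  -- final identification
  have hdual : (InnerProductSpace.toDual ℝ (EuclideanSpace ℝ (Fin d))) (∑' t, Gt t) =
      (ContinuousLinearMap.proj (R := ℝ) (φ := fun _ : S × A => ℝ) (s0, a0)).comp
        (Lsum.comp DR) := by
    refine ContinuousLinearMap.ext fun h => ?_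
    rw [InnerProductSpace.toDual_apply_apply]
    have h1 : HasSum (fun t => (inner ℝ h (Gt t) : ℝ)) (inner ℝ h (∑' t, Gt t) : ℝ) :=
      hGtsummable.hasSum.mapL (innerSL ℝ h)
    have h2 : (inner ℝ (∑' t, Gt t) h : ℝ) = ∑' t, (inner ℝ (Gt t) h : ℝ) := by
      rw [real_inner_comm, h1.tsum_eq.symm]
      exact tsum_congr fun t => real_inner_comm _ _
    rw [h2]
    have h3 : ∑' t, (inner ℝ (Gt t) h : ℝ) = ∑' t, ((B ^ t) (DR h)) (s0, a0) :=
      tsum_congr fun t => hGtinner t h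
    rw [h3, ← hEval h]
    rfl
  have hG : HasGradientAt (fun θ' => Q θ' s0 a0) (∑' t, Gt t) θ := by
    rw [hasGradientAt_iff_hasFDerivAt, hdual]
    exact hfQ
  exact hG.gradient
end
end

section
/- If the reward gradient is uniformly bounded, ||∇_θ r(s,a;θ)|| ≤ L_r for all s, a, θ, then the optimal soft Q-function is Lipschitz continuous in the reward parameter: for all θ₁, θ₂ and all (s,a), |Q_{θ₁}(s,a) − Q_{θ₂}(s,a)| ≤ L_q ||θ₁ − θ₂||, where L_q = L_r/(1−γ). -/
open Real BigOperators Finset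

noncomputable section

/-! The soft Bellman operator `Q ↦ R + γ P̂ (lse Q)` is a `γ`-contraction in the sup norm, because
log-sum-exp is `1`-Lipschitz for the sup norm and `P̂` averages. Hence two fixed points with rewards
differing by at most `c` differ by at most `c / (1 - γ)`, and the gradient bound gives
`c = L_r ‖θ₁ - θ₂‖` by the mean value inequality. -/

theorem log_sum_exp_sub_le {A : Type} [Fintype A] [Nonempty A] {f g : A → ℝ} {M : ℝ}
    (h : ∀ a, f a ≤ g a + M) :
    log (∑ a, exp (f a)) - log (∑ a, exp (g a)) ≤ M := by
  have hg : 0 < ∑ a, exp (g a) := sum_pos (fun a _ => exp_pos _) univ_nonempty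
  have hf : 0 < ∑ a, exp (f a) := sum_pos (fun a _ => exp_pos _) univ_nonempty
  have hle : ∑ a, exp (f a) ≤ exp M * ∑ a, exp (g a) := by
    rw [mul_sum]
    exact sum_le_sum fun a _ => by rw [← exp_add]; exact exp_le_exp.2 (by linarith [h a])
  have := log_le_log hf hle
  rw [log_mul (exp_pos M).ne' hg.ne', log_exp] at this
  linarith

theorem abs_lse_sub_le {S A : Type} [Fintype A] [Nonempty A] {Q Q' : S → A → ℝ} {M : ℝ} (s : S)
    (h : ∀ a, |Q s a - Q' s a| ≤ M) : |lse Q s - lse Q' s| ≤ M :=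
  abs_sub_le_iff.2
    ⟨log_sum_exp_sub_le fun a => by linarith [(abs_sub_le_iff.1 (h a)).1],
      log_sum_exp_sub_le fun a => by linarith [(abs_sub_le_iff.1 (h a)).2]⟩

theorem abs_sum_mul_le_of_sum_eq_one {ι : Type} [Fintype ι] {p x : ι → ℝ} {M : ℝ}
    (hp : ∀ i, 0 ≤ p i) (hp1 : ∑ i, p i = 1) (hx : ∀ i, |x i| ≤ M) :
    |∑ i, p i * x i| ≤ M :=
  calc |∑ i, p i * x i|
      ≤ ∑ i, |p i * x i| := abs_sum_le_sum_abs _ _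
    _ ≤ ∑ i, p i * M := sum_le_sum fun i _ => by
        rw [abs_mul, abs_of_nonneg (hp i)]
        exact mul_le_mul_of_nonneg_left (hx i) (hp i)
    _ = M := by rw [← sum_mul, hp1, one_mul]

theorem abs_sub_le_of_norm_gradient_le {E : Type} [NormedAddCommGroup E] [InnerProductSpace ℝ E]
    [CompleteSpace E] {f : E → ℝ} (hf : Differentiable ℝ f) {C : ℝ}
    (hC : ∀ x, ‖gradient f x‖ ≤ C) (x y : E) : |f x - f y| ≤ C * ‖x - y‖ := by
  have hfderiv : ∀ z ∈ Set.univ, ‖fderiv ℝ f z‖ ≤ C := fun z _ => by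
    simpa only [gradient, LinearIsometryEquiv.norm_map] using hC z
  simpa only [Real.norm_eq_abs] using convex_univ.norm_image_sub_le_of_norm_fderiv_le
    (fun z _ => hf z) hfderiv (Set.mem_univ y) (Set.mem_univ x)

theorem abs_apply_apply_le_norm {ι κ : Type} [Fintype ι] [Fintype κ] (f : ι → κ → ℝ)
    (i : ι) (j : κ) : |f i j| ≤ ‖f‖ :=
  (norm_le_pi_norm (f i) j).trans (norm_le_pi_norm f i)

section SoftBellman

variable {S A : Type} [Fintype S] [Fintype A] {γ : ℝ} {P : S → A → S → ℝ}
  {R₁ R₂ Q₁ Q₂ : S → A → ℝ} {c : ℝ}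

theorem abs_softBellman_sub_le (hγ : 0 ≤ γ) (hP : IsKernel P)
    (hR : ∀ s a, |R₁ s a - R₂ s a| ≤ c)
    (hQ₁ : ∀ s a, Q₁ s a = R₁ s a + γ * ∑ s', P s a s' * lse Q₁ s')
    (hQ₂ : ∀ s a, Q₂ s a = R₂ s a + γ * ∑ s', P s a s' * lse Q₂ s') (s : S) (a : A) :
    |Q₁ s a - Q₂ s a| ≤ c + γ * ‖Q₁ - Q₂‖ := by
  have : Nonempty A := ⟨a⟩
  have hV : |∑ s', P s a s' * (lse Q₁ s' - lse Q₂ s')| ≤ ‖Q₁ - Q₂‖ :=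
    abs_sum_mul_le_of_sum_eq_one (hP.1 s a) (hP.2 s a) fun s' =>
      abs_lse_sub_le s' (abs_apply_apply_le_norm (Q₁ - Q₂) s')
  have hdiff : Q₁ s a - Q₂ s a
      = (R₁ s a - R₂ s a) + γ * ∑ s', P s a s' * (lse Q₁ s' - lse Q₂ s') := by
    simp only [hQ₁ s a, hQ₂ s a, mul_sub, sum_sub_distrib]
    ring
  calc |Q₁ s a - Q₂ s a|
      ≤ |R₁ s a - R₂ s a| + γ * |∑ s', P s a s' * (lse Q₁ s' - lse Q₂ s')| := by
        rw [hdiff]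
        exact (abs_add_le _ _).trans_eq (by rw [abs_mul, abs_of_nonneg hγ])
    _ ≤ c + γ * ‖Q₁ - Q₂‖ := add_le_add (hR s a) (mul_le_mul_of_nonneg_left hV hγ)

theorem abs_softBellman_sub_le_div (hγ₀ : 0 ≤ γ) (hγ₁ : γ < 1) (hP : IsKernel P)
    (hR : ∀ s a, |R₁ s a - R₂ s a| ≤ c)
    (hQ₁ : ∀ s a, Q₁ s a = R₁ s a + γ * ∑ s', P s a s' * lse Q₁ s')
    (hQ₂ : ∀ s a, Q₂ s a = R₂ s a + γ * ∑ s', P s a s' * lse Q₂ s') (s : S) (a : A) :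
    |Q₁ s a - Q₂ s a| ≤ c / (1 - γ) := by
  have hc : 0 ≤ c := (abs_nonneg _).trans (hR s a)
  have hnorm : ‖Q₁ - Q₂‖ ≤ c + γ * ‖Q₁ - Q₂‖ :=
    (pi_norm_le_iff_of_nonneg (by positivity)).2 fun s =>
      (pi_norm_le_iff_of_nonneg (by positivity)).2 fun a =>
        abs_softBellman_sub_le hγ₀ hP hR hQ₁ hQ₂ s a
  refine (abs_apply_apply_le_norm (Q₁ - Q₂) s a).trans ?_
  rw [le_div_iff₀ (by linarith)]
  linarith

end SoftBellman

theorem stmt9_general {S A : Type} [Fintype S] [Fintype A] (d : ℕ)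
    (γ : ℝ) (hγ : γ ∈ Set.Ioo (0 : ℝ) 1)
    (Phat : S → A → S → ℝ) (hPhat : IsKernel Phat)
    (r : S → A → EuclideanSpace ℝ (Fin d) → ℝ) (U : S → A → ℝ)
    (hrd : ∀ s a, Differentiable ℝ (r s a))
    (Lr : ℝ) (hrb : ∀ s a θ, ‖gradient (r s a) θ‖ ≤ Lr)
    (Q : EuclideanSpace ℝ (Fin d) → S → A → ℝ)
    (hQ : ∀ θ s a, Q θ s a = r s a θ + U s a + γ * ∑ s', Phat s a s' * lse (Q θ) s') :
    ∀ θ₁ θ₂ s a, |Q θ₁ s a - Q θ₂ s a| ≤ Lr / (1 - γ) * ‖θ₁ - θ₂‖ := by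
  intro θ₁ θ₂ s a
  have hR : ∀ s a, |(r s a θ₁ + U s a) - (r s a θ₂ + U s a)| ≤ Lr * ‖θ₁ - θ₂‖ := fun s a => by
    rw [add_sub_add_right_eq_sub]
    exact abs_sub_le_of_norm_gradient_le (hrd s a) (hrb s a) θ₁ θ₂
  rw [div_mul_eq_mul_div]
  exact abs_softBellman_sub_le_div hγ.1.le hγ.2 hPhat hR (hQ θ₁) (hQ θ₂) s a

/-- **Lipschitz continuity of the optimal soft Q-function in `θ`.**
If `‖∇_θ r(s,a;θ)‖ ≤ L_r` for all `s, a, θ`, then the optimal soft Q-function of the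
entropy-regularized MDP with kernel `P̂` and reward `r(·,·;θ) + U` satisfies
`|Q_{θ₁}(s,a) - Q_{θ₂}(s,a)| ≤ L_q ‖θ₁ - θ₂‖` with `L_q = L_r/(1-γ)`. -/
theorem stmt9 {S A : Type} [Fintype S] [Fintype A] [Nonempty S] [Nonempty A] (d : ℕ)
    (γ : ℝ) (hγ : γ ∈ Set.Ioo (0 : ℝ) 1)
    (Phat : S → A → S → ℝ) (hPhat : IsKernel Phat)
    (r : S → A → EuclideanSpace ℝ (Fin d) → ℝ) (U : S → A → ℝ)
    (hrd : ∀ s a, Differentiable ℝ (r s a))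
    (Lr : ℝ) (hrb : ∀ s a θ, ‖gradient (r s a) θ‖ ≤ Lr)
    (Q : EuclideanSpace ℝ (Fin d) → S → A → ℝ)
    (hQ : ∀ θ s a, Q θ s a = r s a θ + U s a + γ * ∑ s', Phat s a s' * lse (Q θ) s') :
    ∀ θ₁ θ₂ s a, |Q θ₁ s a - Q θ₂ s a| ≤ Lr / (1 - γ) * ‖θ₁ - θ₂‖ :=
  stmt9_general d γ hγ Phat hPhat r U hrd Lr hrb Q hQ
end
end
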